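/- arXiv:1506.09154 — 8 statements merged into one kernel-verified Lean document; each statement's English description precedes it below -/
import Mathlib

section
/- Let f, f1, f2 : B_1(0)∖{0} → ℂ be smooth functions (in the real sense) such that each of the functions z ↦ z·f(z), z ↦ z·f1(z), z ↦ z·f2(z) extends to a smooth function on the full ball B_1(0), and suppose that f1 is holomorphic on B_1(0)∖{0} with a simple pole at 0. Then the function φ : B_1(0) → ℂ defined by φ(z) = f(z)/(|f1(z)|² + |f2(z)|²) for z ≠ 0 and φ(0) = 0 is well defined and C^∞ (as a map of real variables) on some open neighborhood of 0. -/
open Complex Metric Set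

/-- If `f, f1, f2` are smooth on the punctured unit ball, `z·f`, `z·f1`, `z·f2`
extend smoothly to the full ball, and `f1` is holomorphic on the punctured ball with a simple
pole at `0` (i.e. `z·f1` extends holomorphically with nonzero value at `0`), then
`φ(z) = f(z)/(|f1(z)|² + |f2(z)|²)`, `φ(0) = 0`, is smooth on a neighborhood of `0`. -/
theorem stmt_0
    (f f1 f2 h h1 h2 : ℂ → ℂ)
    (hf : ContDiffOn ℝ (⊤ : ℕ∞) f (ball 0 1 \ {0}))
    (hf1 : ContDiffOn ℝ (⊤ : ℕ∞) f1 (ball 0 1 \ {0}))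
    (hf2 : ContDiffOn ℝ (⊤ : ℕ∞) f2 (ball 0 1 \ {0}))
    (hh : ContDiffOn ℝ (⊤ : ℕ∞) h (ball 0 1))
    (hhf : ∀ z ∈ ball (0:ℂ) 1 \ {0}, h z = z * f z)
    (hh1 : ContDiffOn ℝ (⊤ : ℕ∞) h1 (ball 0 1))
    (hhf1 : ∀ z ∈ ball (0:ℂ) 1 \ {0}, h1 z = z * f1 z)
    (hh2 : ContDiffOn ℝ (⊤ : ℕ∞) h2 (ball 0 1))
    (hhf2 : ∀ z ∈ ball (0:ℂ) 1 \ {0}, h2 z = z * f2 z)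
    (hol1 : DifferentiableOn ℂ f1 (ball 0 1 \ {0}))
    (hpole1 : DifferentiableOn ℂ h1 (ball 0 1) ∧ h1 0 ≠ 0) :
    ∃ V : Set ℂ, IsOpen V ∧ (0:ℂ) ∈ V ∧ V ⊆ ball 0 1 ∧
      ContDiffOn ℝ (⊤ : ℕ∞)
        (fun z => if z = 0 then 0
          else f z / (((‖f1 z‖^2 + ‖f2 z‖^2 : ℝ)) : ℂ)) V := by
  -- denominator D extends to the full ball
  set D : ℂ → ℝ := fun z => ‖h1 z‖ ^ 2 + ‖h2 z‖ ^ 2 with hD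
  have habs : ∀ (g : ℂ → ℂ), ContDiffOn ℝ (⊤ : ℕ∞) g (ball 0 1) →
      ContDiffOn ℝ (⊤ : ℕ∞) (fun z => ‖g z‖ ^ 2) (ball 0 1) := by
    intro g hg
    have e : (fun z => ‖g z‖ ^ 2) = fun z => (g z).re ^ 2 + (g z).im ^ 2 := by
      funext z
      rw [Complex.sq_norm, Complex.normSq_apply]; ring
    rw [e]
    exact ((Complex.reCLM.contDiff.comp_contDiffOn hg).pow 2).add
      ((Complex.imCLM.contDiff.comp_contDiffOn hg).pow 2)
  have hDsm : ContDiffOn ℝ (⊤ : ℕ∞) D (ball 0 1) := (habs h1 hh1).add (habs h2 hh2)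
  refine ⟨ball 0 1 ∩ D ⁻¹' ({0}ᶜ), ?_, ?_, inter_subset_left, ?_⟩
  · exact hDsm.continuousOn.isOpen_inter_preimage isOpen_ball isOpen_compl_singleton
  · refine ⟨mem_ball_self one_pos, ?_⟩
    simp only [mem_preimage, mem_compl_iff, mem_singleton_iff, hD]
    intro hc
    have h1z : ‖h1 0‖ ^ 2 = 0 := by nlinarith [sq_nonneg (‖h1 0‖), sq_nonneg (‖h2 0‖), norm_nonneg (h1 0), norm_nonneg (h2 0)]
    exact hpole1.2 (by simpa using pow_eq_zero_iff (n := 2) (by norm_num) |>.mp h1z)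
  · -- smooth model function g
    have hg : ContDiffOn ℝ (⊤ : ℕ∞) (fun z => h z * (starRingEnd ℂ) z / ((D z : ℝ) : ℂ))
        (ball 0 1 ∩ D ⁻¹' ({0}ᶜ)) := by
      have A : ContDiffOn ℝ (⊤ : ℕ∞) (fun z => h z * (starRingEnd ℂ) z) (ball 0 1 ∩ D ⁻¹' ({0}ᶜ)) :=
        (hh.mono inter_subset_left).mul
          (Complex.conjCLE.contDiff.comp_contDiffOn contDiffOn_id)
      have B : ContDiffOn ℝ (⊤ : ℕ∞) (fun z => ((D z : ℝ) : ℂ)) (ball 0 1 ∩ D ⁻¹' ({0}ᶜ)) :=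
        Complex.ofRealCLM.contDiff.comp_contDiffOn (hDsm.mono inter_subset_left)
      simp only [div_eq_mul_inv]
      refine A.mul (B.inv ?_)
      rintro z ⟨-, hz2⟩
      simpa using Complex.ofReal_ne_zero.mpr hz2
    refine ContDiffOn.congr hg ?_
    rintro z ⟨hzb, hzD⟩
    by_cases hz0 : z = 0
    · simp [hz0]
    · simp only [if_neg hz0]
      have hmem : z ∈ ball (0:ℂ) 1 \ {0} := ⟨hzb, hz0⟩
      have e1 : f z = h z / z := by rw [hhf z hmem]; field_simp
      have a1 : ‖h1 z‖ = ‖z‖ * ‖f1 z‖ := by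
        rw [hhf1 z hmem, norm_mul]
      have a2 : ‖h2 z‖ = ‖z‖ * ‖f2 z‖ := by
        rw [hhf2 z hmem, norm_mul]
      have haz : ‖z‖ ≠ 0 := by simpa using hz0
      have hDz : D z ≠ 0 := hzD
      have hsum : (‖f1 z‖) ^ 2 + (‖f2 z‖) ^ 2
          = D z / ‖z‖ ^ 2 := by
        simp only [hD]; rw [a1, a2]; field_simp
      rw [e1, hsum]
      have hzz : (z : ℂ) * (starRingEnd ℂ) z = ((‖z‖ : ℝ) ^ 2 : ℝ) := by
        rw [Complex.mul_conj]
        push_cast [Complex.sq_norm]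
        rfl
      have hDz' : ((D z : ℝ) : ℂ) ≠ 0 := Complex.ofReal_ne_zero.mpr hDz
      have haz' : ((‖z‖ : ℝ) : ℂ) ≠ 0 := Complex.ofReal_ne_zero.mpr haz
      push_cast
      field_simp
      push_cast at hzz
      linear_combination (-(h z)) * hzz
end

section
/- Let f, f1, f2 : B_1(0)∖{0} → ℂ be smooth functions such that each of z ↦ z·f(z), z ↦ z·f1(z), z ↦ z·f2(z) extends to a smooth function on B_1(0), denote these extensions by h, h1, h2, and suppose that f and f1 are holomorphic on B_1(0)∖{0} with a simple pole at 0. Then the function φ : B_1(0) → ℂ defined by φ(z) = f(z)/(|f1(z)|² + |f2(z)|²) for z ≠ 0 and φ(0) = 0 satisfies ∂_z φ(0) = 0 and ∂_{z̄} φ(0) = h(0)/(|h1(0)|² + |h2(0)|²) ≠ 0. -/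
open Complex Metric Set ComplexConjugate

/-- With `f, f1, f2` smooth on the punctured unit ball, `z·f, z·f1, z·f2`
extending smoothly to `h, h1, h2` on the full ball, and `f` and `f1` holomorphic on the
punctured ball with simple poles at `0`, the map `φ(z) = f(z)/(|f1(z)|²+|f2(z)|²)`, `φ(0)=0`,
is real-differentiable at `0` with Wirtinger derivatives `∂_z φ(0) = 0` and
`∂_{z̄} φ(0) = h(0)/(|h1(0)|²+|h2(0)|²) ≠ 0`. -/
theorem stmt_1
    (f f1 f2 h h1 h2 : ℂ → ℂ)
    (hf : ContDiffOn ℝ (⊤ : ℕ∞) f (ball 0 1 \ {0}))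
    (hf1 : ContDiffOn ℝ (⊤ : ℕ∞) f1 (ball 0 1 \ {0}))
    (hf2 : ContDiffOn ℝ (⊤ : ℕ∞) f2 (ball 0 1 \ {0}))
    (hh : ContDiffOn ℝ (⊤ : ℕ∞) h (ball 0 1))
    (hhf : ∀ z ∈ ball (0:ℂ) 1 \ {0}, h z = z * f z)
    (hh1 : ContDiffOn ℝ (⊤ : ℕ∞) h1 (ball 0 1))
    (hhf1 : ∀ z ∈ ball (0:ℂ) 1 \ {0}, h1 z = z * f1 z)
    (hh2 : ContDiffOn ℝ (⊤ : ℕ∞) h2 (ball 0 1))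
    (hhf2 : ∀ z ∈ ball (0:ℂ) 1 \ {0}, h2 z = z * f2 z)
    (hol : DifferentiableOn ℂ f (ball 0 1 \ {0}))
    (hpole : DifferentiableOn ℂ h (ball 0 1) ∧ h 0 ≠ 0)
    (hol1 : DifferentiableOn ℂ f1 (ball 0 1 \ {0}))
    (hpole1 : DifferentiableOn ℂ h1 (ball 0 1) ∧ h1 0 ≠ 0) :
    DifferentiableAt ℝ
      (fun z => if z = 0 then 0
        else f z / ((((‖f1 z‖)^2 + (‖f2 z‖)^2 : ℝ)) : ℂ)) 0 ∧
    (1/2 : ℂ) * ((fderiv ℝ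
        (fun z => if z = 0 then 0
          else f z / ((((‖f1 z‖)^2 + (‖f2 z‖)^2 : ℝ)) : ℂ)) 0) 1
      - Complex.I * (fderiv ℝ
        (fun z => if z = 0 then 0
          else f z / ((((‖f1 z‖)^2 + (‖f2 z‖)^2 : ℝ)) : ℂ)) 0) Complex.I)
      = 0 ∧
    (1/2 : ℂ) * ((fderiv ℝ
        (fun z => if z = 0 then 0
          else f z / ((((‖f1 z‖)^2 + (‖f2 z‖)^2 : ℝ)) : ℂ)) 0) 1
      + Complex.I * (fderiv ℝ
        (fun z => if z = 0 then 0
          else f z / ((((‖f1 z‖)^2 + (‖f2 z‖)^2 : ℝ)) : ℂ)) 0) Complex.I)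
      = h 0 / ((((‖h1 0‖)^2 + (‖h2 0‖)^2 : ℝ)) : ℂ) ∧
    h 0 / ((((‖h1 0‖)^2 + (‖h2 0‖)^2 : ℝ)) : ℂ) ≠ 0 := by
  have h0mem : (0:ℂ) ∈ ball (0:ℂ) 1 := by simp
  -- generic cast of the denominator to a complex product
  have hcast : ∀ w1 w2 : ℂ,
      ((((‖w1‖)^2 + (‖w2‖)^2 : ℝ)) : ℂ)
        = w1 * conj w1 + w2 * conj w2 := by
    intro w1 w2
    rw [Complex.mul_conj, Complex.mul_conj]
    norm_cast
    rw [Complex.sq_norm, Complex.sq_norm]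
  set E : ℂ → ℂ := fun z => h1 z * conj (h1 z) + h2 z * conj (h2 z) with hEdef
  have hE0 : E 0 ≠ 0 := by
    rw [hEdef]
    simp only
    rw [← hcast]
    have h1p : 0 < ‖h1 0‖ := norm_pos_iff.mpr hpole1.2
    have : (0:ℝ) < (‖h1 0‖)^2 + (‖h2 0‖)^2 := by positivity
    exact_mod_cast this.ne'
  set g : ℂ → ℂ := fun z => h z / E z with hgdef
  set φ : ℂ → ℂ := fun z => if z = 0 then 0
    else f z / ((((‖f1 z‖)^2 + (‖f2 z‖)^2 : ℝ)) : ℂ) with hφdef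
  set ψ : ℂ → ℂ := fun z => conj z * g z with hψdef
  -- φ = ψ near 0
  have heq : φ =ᶠ[nhds (0:ℂ)] ψ := by
    filter_upwards [isOpen_ball.mem_nhds h0mem] with z hz
    by_cases hz0 : z = 0
    · simp [hφdef, hψdef, hz0]
    · have hmem : z ∈ ball (0:ℂ) 1 \ {0} := ⟨hz, hz0⟩
      have e1 := hhf z hmem
      have e2 := hhf1 z hmem
      have e3 := hhf2 z hmem
      simp only [hφdef, hψdef, hgdef, hEdef, if_neg hz0]
      rw [hcast, e1, e2, e3, map_mul, map_mul]
      have hcz : conj z ≠ 0 := by simpa using hz0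
      by_cases hd : f1 z * conj (f1 z) + f2 z * conj (f2 z) = 0
      · have : z * f1 z * (conj z * conj (f1 z)) + z * f2 z * (conj z * conj (f2 z))
            = z * conj z * (f1 z * conj (f1 z) + f2 z * conj (f2 z)) := by ring
        rw [hd, this, hd, mul_zero, div_zero, div_zero, mul_zero]
      · have hden : z * f1 z * ((starRingEnd ℂ) z * (starRingEnd ℂ) (f1 z))
              + z * f2 z * ((starRingEnd ℂ) z * (starRingEnd ℂ) (f2 z))
            = (z * (starRingEnd ℂ) z) * (f1 z * (starRingEnd ℂ) (f1 z)
              + f2 z * (starRingEnd ℂ) (f2 z)) := by ring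
        rw [hden]
        field_simp
  -- differentiability of g at 0
  have hhd : DifferentiableAt ℝ h 0 :=
    (hh.contDiffAt (isOpen_ball.mem_nhds h0mem)).differentiableAt (by simp)
  have hh1d : DifferentiableAt ℝ h1 0 :=
    (hh1.contDiffAt (isOpen_ball.mem_nhds h0mem)).differentiableAt (by simp)
  have hh2d : DifferentiableAt ℝ h2 0 :=
    (hh2.contDiffAt (isOpen_ball.mem_nhds h0mem)).differentiableAt (by simp)
  have hconjd : ∀ (u : ℂ → ℂ), DifferentiableAt ℝ u 0 →
      DifferentiableAt ℝ (fun z => conj (u z)) 0 := fun u hu =>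
    Complex.conjCLE.differentiableAt.comp 0 hu
  have hEd : DifferentiableAt ℝ E 0 :=
    ((hh1d.mul (hconjd h1 hh1d)).add (hh2d.mul (hconjd h2 hh2d)))
  have hgd : DifferentiableAt ℝ g 0 := by
    have : g = fun z => h z * (E z)⁻¹ := by
      funext z; rw [hgdef]; simp [div_eq_mul_inv]
    rw [this]
    exact hhd.mul (hEd.inv hE0)
  -- derivative of ψ at 0
  have hC : HasFDerivAt (fun z : ℂ => conj z)
      (Complex.conjCLE.toContinuousLinearMap) 0 :=
    Complex.conjCLE.toContinuousLinearMap.hasFDerivAt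
  have hψF : HasFDerivAt ψ
      (conj (0:ℂ) • fderiv ℝ g 0 + g 0 • Complex.conjCLE.toContinuousLinearMap) 0 :=
    hC.mul hgd.hasFDerivAt
  have hψF' : HasFDerivAt ψ (g 0 • Complex.conjCLE.toContinuousLinearMap) 0 := by
    simpa using hψF
  have hφF : HasFDerivAt φ (g 0 • Complex.conjCLE.toContinuousLinearMap) 0 :=
    hψF'.congr_of_eventuallyEq heq
  have hfd : fderiv ℝ φ 0 = g 0 • Complex.conjCLE.toContinuousLinearMap := hφF.fderiv
  have hval : g 0 = h 0 / ((((‖h1 0‖)^2 + (‖h2 0‖)^2 : ℝ)) : ℂ) := by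
    rw [hcast (h1 0) (h2 0)]
  have hne : h 0 / ((((‖h1 0‖)^2 + (‖h2 0‖)^2 : ℝ)) : ℂ) ≠ 0 := by
    rw [← hval]
    exact div_ne_zero hpole.2 hE0
  refine ⟨hφF.differentiableAt, ?_, ?_, hne⟩
  · rw [hfd]
    simp [Complex.conjCLE_apply, Complex.conj_I]
    linear_combination g 0 * Complex.I_mul_I
  · rw [hfd, ← hval]
    simp [Complex.conjCLE_apply, Complex.conj_I]
    linear_combination (-(g 0)/2) * Complex.I_mul_I
end

section
/- Let f, f1, f2 : B_1(0)∖{0} → ℂ be smooth functions such that each of z ↦ z·f(z), z ↦ z·f1(z), z ↦ z·f2(z) extends to a smooth function on B_1(0), and suppose that f and f1 are holomorphic on B_1(0)∖{0} with a simple pole at 0. Then the function φ : B_1(0) → ℂ defined by φ(z) = f(z)/(|f1(z)|² + |f2(z)|²) for z ≠ 0 and φ(0) = 0 is real-differentiable at 0 and its real Fréchet derivative Dφ(0) : ℂ → ℂ is a bijective real-linear map (Dφ(0) has full rank). -/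
open Complex Metric Set

lemma normSq_diffAt {w : ℂ → ℂ} {x : ℂ} (hw : DifferentiableAt ℝ w x) :
    DifferentiableAt ℝ (fun z => Complex.normSq (w z)) x := by
  have : (fun z => Complex.normSq (w z))
      = fun z => (w z).re * (w z).re + (w z).im * (w z).im := by
    funext z; rw [Complex.normSq_apply]
  rw [this]
  have hre : DifferentiableAt ℝ (fun z => (w z).re) x :=
    (Complex.reCLM.differentiableAt).comp x hw
  have him : DifferentiableAt ℝ (fun z => (w z).im) x :=
    (Complex.imCLM.differentiableAt).comp x hw
  exact (hre.mul hre).add (him.mul him)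

/-- With `f, f1, f2` smooth on the punctured unit ball, `z·f, z·f1, z·f2`
extending smoothly to the full ball, and `f` and `f1` holomorphic on the punctured ball with
simple poles at `0`, the map `φ(z) = f(z)/(|f1(z)|²+|f2(z)|²)`, `φ(0)=0`, is
real-differentiable at `0` and its real Fréchet derivative `Dφ(0) : ℂ → ℂ` is bijective. -/
theorem stmt_2
    (f f1 f2 h h1 h2 : ℂ → ℂ)
    (hf : ContDiffOn ℝ (⊤ : ℕ∞) f (ball 0 1 \ {0}))
    (hf1 : ContDiffOn ℝ (⊤ : ℕ∞) f1 (ball 0 1 \ {0}))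
    (hf2 : ContDiffOn ℝ (⊤ : ℕ∞) f2 (ball 0 1 \ {0}))
    (hh : ContDiffOn ℝ (⊤ : ℕ∞) h (ball 0 1))
    (hhf : ∀ z ∈ ball (0:ℂ) 1 \ {0}, h z = z * f z)
    (hh1 : ContDiffOn ℝ (⊤ : ℕ∞) h1 (ball 0 1))
    (hhf1 : ∀ z ∈ ball (0:ℂ) 1 \ {0}, h1 z = z * f1 z)
    (hh2 : ContDiffOn ℝ (⊤ : ℕ∞) h2 (ball 0 1))
    (hhf2 : ∀ z ∈ ball (0:ℂ) 1 \ {0}, h2 z = z * f2 z)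
    (hol : DifferentiableOn ℂ f (ball 0 1 \ {0}))
    (hpole : DifferentiableOn ℂ h (ball 0 1) ∧ h 0 ≠ 0)
    (hol1 : DifferentiableOn ℂ f1 (ball 0 1 \ {0}))
    (hpole1 : DifferentiableOn ℂ h1 (ball 0 1) ∧ h1 0 ≠ 0) :
    DifferentiableAt ℝ
      (fun z => if z = 0 then 0
        else f z / ((((‖f1 z‖)^2 + (‖f2 z‖)^2 : ℝ)) : ℂ)) 0 ∧
    Function.Bijective
      (fderiv ℝ
        (fun z => if z = 0 then 0
          else f z / ((((‖f1 z‖)^2 + (‖f2 z‖)^2 : ℝ)) : ℂ)) 0) := by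
  classical
  set D : ℂ → ℝ := fun z => Complex.normSq (h1 z) + Complex.normSq (h2 z) with hDdef
  set G : ℂ → ℂ := fun z => h z / ((D z : ℝ) : ℂ) with hGdef
  set ψ : ℂ → ℂ := fun z => (starRingEnd ℂ) z * G z with hψdef
  have h0mem : (0:ℂ) ∈ ball (0:ℂ) 1 := by simp
  have hball : ball (0:ℂ) 1 ∈ nhds (0:ℂ) := isOpen_ball.mem_nhds h0mem
  -- eventual equality
  have heq : (fun z => if z = 0 then 0
      else f z / ((((‖f1 z‖)^2 + (‖f2 z‖)^2 : ℝ)) : ℂ))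
      =ᶠ[nhds 0] ψ := by
    filter_upwards [hball] with z hz
    by_cases hz0 : z = 0
    · simp [ψ, hz0]
    · have hm : z ∈ ball (0:ℂ) 1 \ {0} := ⟨hz, hz0⟩
      have e1 := hhf z hm
      have e2 := hhf1 z hm
      have e3 := hhf2 z hm
      have hns : Complex.normSq z ≠ 0 := (Complex.normSq_pos.mpr hz0).ne'
      have hnsC : ((Complex.normSq z : ℝ) : ℂ) ≠ 0 := by
        exact_mod_cast Complex.ofReal_ne_zero.mpr hns
      simp only [if_neg hz0, ψ, G, D, e1, e2, e3, Complex.normSq_mul]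
      have habs : ∀ w : ℂ, (‖w‖) ^ 2 = Complex.normSq w := fun w => Complex.sq_norm w
      rw [habs, habs]
      have hfac : Complex.normSq z * Complex.normSq (f1 z)
          + Complex.normSq z * Complex.normSq (f2 z)
          = Complex.normSq z * (Complex.normSq (f1 z) + Complex.normSq (f2 z)) := by ring
      rw [hfac]
      push_cast
      rw [show (starRingEnd ℂ) z * (↑z * f z / ((Complex.normSq z : ℂ)
            * ((Complex.normSq (f1 z) : ℂ) + (Complex.normSq (f2 z) : ℂ))))
          = ((starRingEnd ℂ) z * z) * f z / ((Complex.normSq z : ℂ)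
            * ((Complex.normSq (f1 z) : ℂ) + (Complex.normSq (f2 z) : ℂ))) by ring]
      rw [show ((starRingEnd ℂ) z * z) = ((Complex.normSq z : ℝ) : ℂ) by
        rw [mul_comm]; exact Complex.mul_conj z]
      rw [mul_div_mul_left _ _ hnsC]
  -- differentiability data at 0
  have hhd : DifferentiableAt ℝ h 0 :=
    (hh.contDiffAt hball).differentiableAt (by simp)
  have hh1d : DifferentiableAt ℝ h1 0 :=
    (hh1.contDiffAt hball).differentiableAt (by simp)
  have hh2d : DifferentiableAt ℝ h2 0 :=
    (hh2.contDiffAt hball).differentiableAt (by simp)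
  have hDd : DifferentiableAt ℝ D 0 := (normSq_diffAt hh1d).add (normSq_diffAt hh2d)
  have hD0 : D 0 ≠ 0 := by
    have h1pos : 0 < Complex.normSq (h1 0) := Complex.normSq_pos.mpr hpole1.2
    have h2nn : 0 ≤ Complex.normSq (h2 0) := Complex.normSq_nonneg _
    positivity
  have hD0C : ((D 0 : ℝ) : ℂ) ≠ 0 := Complex.ofReal_ne_zero.mpr hD0
  have hDC : DifferentiableAt ℝ (fun z => ((D z : ℝ) : ℂ)) 0 :=
    Complex.ofRealCLM.differentiableAt.comp 0 hDd
  have hGd : DifferentiableAt ℝ G 0 := by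
    have hinv : DifferentiableAt ℝ (fun z => (((D z : ℝ) : ℂ))⁻¹) 0 := hDC.inv hD0C
    have hmul := hhd.mul hinv
    simp only [hGdef, div_eq_mul_inv]
    exact hmul
  set c : ℂ := G 0 with hcdef
  have hc0 : c ≠ 0 := by
    simp only [hcdef, hGdef]
    exact div_ne_zero hpole.2 hD0C
  have hconj : HasFDerivAt (fun z : ℂ => (starRingEnd ℂ) z)
      (Complex.conjCLE : ℂ ≃L[ℝ] ℂ).toContinuousLinearMap 0 := by
    have := (Complex.conjCLE : ℂ ≃L[ℝ] ℂ).toContinuousLinearMap.hasFDerivAt (x := (0:ℂ))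
    exact this
  have key : HasFDerivAt ψ (c • (Complex.conjCLE : ℂ ≃L[ℝ] ℂ).toContinuousLinearMap) 0 := by
    have hm := hconj.mul hGd.hasFDerivAt
    have hm' := by simpa [hcdef, map_zero] using hm
    exact hm'
  have hdiff : DifferentiableAt ℝ
      (fun z => if z = 0 then 0
        else f z / ((((‖f1 z‖)^2 + (‖f2 z‖)^2 : ℝ)) : ℂ)) 0 :=
    key.differentiableAt.congr_of_eventuallyEq heq
  refine ⟨hdiff, ?_⟩
  have hfd : fderiv ℝ
      (fun z => if z = 0 then 0
        else f z / ((((‖f1 z‖)^2 + (‖f2 z‖)^2 : ℝ)) : ℂ)) 0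
      = c • (Complex.conjCLE : ℂ ≃L[ℝ] ℂ).toContinuousLinearMap := by
    rw [heq.fderiv_eq]
    exact key.fderiv
  rw [hfd]
  have happ : ∀ v : ℂ,
      (c • (Complex.conjCLE : ℂ ≃L[ℝ] ℂ).toContinuousLinearMap) v = c * (starRingEnd ℂ) v := by
    intro v
    simp [Complex.conjCLE_apply, smul_eq_mul]
  constructor
  · intro a b hab
    rw [happ, happ] at hab
    have := mul_left_cancel₀ hc0 hab
    exact star_injective this
  · intro w
    refine ⟨(starRingEnd ℂ) (w / c), ?_⟩
    rw [happ]
    simp only [RingHomCompTriple.comp_apply, Complex.conj_conj, RingHom.id_apply]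
    field_simp
end

section
/- Let U ⊆ ℂ be open, let p ∈ ℂ and ρ > 0 be such that the circle {z : |z−p| = ρ} is contained in U, and let f : U → ℝ be continuously differentiable. Then the circle integral ∮_{|z−p|=ρ} ∂_z f(ζ) dζ is purely imaginary, i.e. its real part is zero. -/
open Complex Metric Set Real

/-! Since `f` is real-valued, `Re (∂_z f(ζ) · w) = ½ Df(ζ) w` for every `w ∈ ℂ`. Hence the real part
of `∮ ∂_z f dζ` is `½ ∫₀^{2π} (f ∘ γ)'`, where `γ` parametrizes the circle, and this vanishes
because `γ` is closed. -/

theorem re_mul_wirtinger (L : ℂ →L[ℝ] ℝ) (w : ℂ) :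
    (w * ((1/2 : ℂ) * ((L 1 : ℂ) - I * (L I : ℂ)))).re = (1/2 : ℝ) * L w := by
  have hw : L w = w.re * L 1 + w.im * L I := by
    conv_lhs => rw [← re_add_im w]
    rw [show (w.re : ℂ) + w.im * I = w.re • (1 : ℂ) + w.im • I by simp]
    simp only [map_add, map_smul, smul_eq_mul]
  rw [hw]
  simp only [mul_re, mul_im, sub_re, sub_im, ofReal_re, ofReal_im, I_re, I_im]
  norm_num
  ring

theorem re_circleIntegral_eq_zero_of_hasFDerivAt {c : ℂ} {R : ℝ} (hR : 0 ≤ R) {f : ℂ → ℝ}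
    {f' : ℂ → ℂ →L[ℝ] ℝ} {g : ℂ → ℂ} (hf : ∀ z ∈ sphere c R, HasFDerivAt f (f' z) z)
    (hg : ContinuousOn g (sphere c R)) (hfg : ∀ z ∈ sphere c R, ∀ w, (w * g z).re = f' z w) :
    (∮ z in C(c, R), g z).re = 0 := by
  have hγ : ∀ θ, circleMap c R θ ∈ sphere c R := circleMap_mem_sphere c hR
  have hcont : Continuous fun θ => deriv (circleMap c R) θ * g (circleMap c R θ) := by
    simp only [deriv_circleMap]
    exact ((continuous_circleMap 0 R).mul continuous_const).mul
      (hg.comp_continuous (continuous_circleMap c R) hγ)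
  have hderiv : ∀ θ, HasDerivAt (f ∘ circleMap c R)
      (deriv (circleMap c R) θ * g (circleMap c R θ)).re θ := fun θ => by
    rw [hfg _ (hγ θ), deriv_circleMap]
    exact (hf _ (hγ θ)).comp_hasDerivAt θ (hasDerivAt_circleMap c R θ)
  calc (∮ z in C(c, R), g z).re
      = ∫ θ in (0)..(2 * π), (deriv (circleMap c R) θ * g (circleMap c R θ)).re :=
        (intervalIntegral.intervalIntegral_re (hcont.intervalIntegrable _ _)).symm
    _ = f (circleMap c R (2 * π)) - f (circleMap c R 0) :=
        intervalIntegral.integral_eq_sub_of_hasDerivAt (fun θ _ => hderiv θ)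
          ((continuous_re.comp hcont).intervalIntegrable _ _)
    _ = 0 := by rw [← zero_add (2 * π), periodic_circleMap, sub_self]

/-- For a `C¹` real-valued function `f` on an open set `U ⊆ ℂ` containing the
circle `{|z−p| = ρ}`, the circle integral of the Wirtinger derivative
`∂_z f = ½(Df(·)(1) − i·Df(·)(i))` around that circle is purely imaginary. -/
theorem stmt_6 (U : Set ℂ) (hU : IsOpen U) (p : ℂ) (ρ : ℝ) (hρ : 0 < ρ)
    (hsub : Metric.sphere p ρ ⊆ U) (f : ℂ → ℝ) (hf : ContDiffOn ℝ 1 f U) :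
    (∮ ζ in C(p, ρ),
      (1/2 : ℂ) * (((fderiv ℝ f ζ 1 : ℝ) : ℂ)
        - Complex.I * ((fderiv ℝ f ζ Complex.I : ℝ) : ℂ))).re = 0 := by
  have hdiff : ∀ z ∈ U, HasFDerivAt f (fderiv ℝ f z) z := fun z hz =>
    ((hf.differentiableOn one_ne_zero).differentiableAt (hU.mem_nhds hz)).hasFDerivAt
  have hcont : ContinuousOn (fderiv ℝ f) U := hf.continuousOn_fderiv_of_isOpen hU le_rfl
  refine re_circleIntegral_eq_zero_of_hasFDerivAt hρ.le
    (fun z hz => (hdiff z (hsub hz)).const_smul (1/2 : ℝ)) ?_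
    (fun z _ w => re_mul_wirtinger _ w)
  have hL : ∀ v : ℂ, ContinuousOn (fun z => (fderiv ℝ f z v : ℂ)) (sphere p ρ) := fun v =>
    continuous_ofReal.comp_continuousOn ((hcont.mono hsub).clm_apply continuousOn_const)
  exact continuousOn_const.mul ((hL 1).sub (continuousOn_const.mul (hL I)))
end

section
/- Fix ω ∈ ℂ with ω ∉ ℝ, let Γ = {m + nω : m, n ∈ ℤ}, and let P : ℂ∖Γ → ℂ be holomorphic and Γ-periodic such that the function z ↦ z²·P(z) extends holomorphically to a neighborhood of 0 and the derivative of this extension vanishes at 0 (i.e. P has a pole of order at most two with vanishing residue at each lattice point). Let p1, p2 ∈ ℂ, let ω_k ∈ {1, ω}, and let ξ ∈ ℂ be such that the boundary of the parallelogram Q = {ξ − p1 + s·ω_k + t·(p1 − p2) : s, t ∈ [0,1]} does not meet Γ. Then ∫_{[ξ, ξ+ω_k]} ( P(ζ − p1) − P(ζ − p2) ) dζ = 0. -/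
open Complex Metric Set

/-- The lattice `Γ = {m + n·ω : m, n ∈ ℤ}` associated to `ω`. -/
def lattice (ω : ℂ) : Set ℂ := {z : ℂ | ∃ m n : ℤ, z = (m : ℂ) + (n : ℂ) * ω}

/-!
Near a lattice point `γ`, periodicity and the hypothesis at `0` give
`P z = a / (z - γ) ^ 2 + h (z - γ)` with `h` holomorphic at `0` and `a` independent of `γ`.
Subtracting these principal parts at the finitely many lattice points of a disc containing the
parallelogram leaves a holomorphic function, which has a primitive on the disc; as
`a / (z - γ) ^ 2` has the primitive `-a / (z - γ)`, `P` has a primitive on the disc minus the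
lattice. So the integral of `P` around the boundary of the parallelogram vanishes, while its two
sides parallel to `p1 - p2` are translates of each other by the period `ωk`.
-/

open MeasureTheory Filter Topology

section Lattice

variable {ω : ℂ}

lemma lattice_eq_span : lattice ω = (Submodule.span ℤ {1, ω} : Set ℂ) := by
  ext z
  simp [lattice, Submodule.mem_span_pair, eq_comm]

lemma linearIndependent_pair_one_of_im_ne_zero (hω : ω.im ≠ 0) : LinearIndependent ℝ ![1, ω] := by
  refine LinearIndependent.pair_iff.mpr fun s t h => ?_
  have ht : t = 0 := by simpa [hω] using congrArg im h
  subst ht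
  simpa using h

def periodPair (hω : ω.im ≠ 0) : PeriodPair := ⟨1, ω, linearIndependent_pair_one_of_im_ne_zero hω⟩

lemma coe_periodPair_lattice (hω : ω.im ≠ 0) : ((periodPair hω).lattice : Set ℂ) = lattice ω :=
  lattice_eq_span.symm

lemma one_mem_lattice : (1 : ℂ) ∈ lattice ω := ⟨1, 0, by simp⟩

lemma mem_lattice_self : ω ∈ lattice ω := ⟨0, 1, by simp⟩

lemma add_mem_lattice_iff {γ z : ℂ} (hγ : γ ∈ lattice ω) :
    z + γ ∈ lattice ω ↔ z ∈ lattice ω := by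
  rw [lattice_eq_span] at hγ ⊢
  exact Submodule.add_mem_iff_left _ hγ

lemma sub_mem_lattice_iff {γ z : ℂ} (hγ : γ ∈ lattice ω) :
    z - γ ∈ lattice ω ↔ z ∈ lattice ω := by
  rw [lattice_eq_span] at hγ ⊢
  exact Submodule.sub_mem_iff_left _ hγ

lemma finite_lattice_inter_ball (hω : ω.im ≠ 0) (c : ℂ) (r : ℝ) :
    (lattice ω ∩ ball c r).Finite := by
  rw [← coe_periodPair_lattice hω, inter_comm]
  exact Metric.finite_isBounded_inter_isClosed
    (SetLike.isDiscrete_iff_discreteTopology.mpr inferInstance) isBounded_ball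
    (periodPair hω).isClosed_lattice

lemma eventually_notMem_lattice (hω : ω.im ≠ 0) (γ : ℂ) : ∀ᶠ z in 𝓝[≠] γ, z ∉ lattice ω := by
  filter_upwards [mem_nhdsWithin_of_mem_nhds
    ((periodPair hω).compl_lattice_sdiff_singleton_mem_nhds γ), self_mem_nhdsWithin] with z hz hzγ
  simp only [coe_periodPair_lattice, mem_compl_iff, Set.mem_sdiff, mem_singleton_iff, not_and,
    not_not] at hz
  exact fun h => hzγ (hz h)

lemma apply_add_of_mem_lattice {P : ℂ → ℂ} (hper1 : ∀ z ∉ lattice ω, P (z + 1) = P z)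
    (hperω : ∀ z ∉ lattice ω, P (z + ω) = P z) {γ z : ℂ} (hγ : γ ∈ lattice ω)
    (hz : z ∉ lattice ω) : P (z + γ) = P z := by
  set Q := (lattice ω)ᶜ.indicator P
  have hQ : ∀ c ∈ lattice ω, (∀ z ∉ lattice ω, P (z + c) = P z) → Function.Periodic Q c := by
    intro c hc hPc z
    by_cases hz : z ∈ lattice ω <;> simp [Q, hz, add_mem_lattice_iff hc, hPc]
  obtain ⟨m, n, rfl⟩ := id hγ
  have := ((hQ 1 one_mem_lattice hper1).int_mul m).add_period
    ((hQ ω mem_lattice_self hperω).int_mul n) z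
  simpa [Q, hz, add_mem_lattice_iff hγ] using this

end Lattice

lemma exists_eq_div_sq_add_of_deriv_eq_zero {P g : ℂ → ℂ} {V : Set ℂ} {c : ℂ} (hV : V ∈ 𝓝 c)
    (hg : DifferentiableOn ℂ g V) (hgP : ∀ z ∈ V, z ≠ c → g z = (z - c) ^ 2 * P z)
    (hg' : deriv g c = 0) :
    ∃ h : ℂ → ℂ, DifferentiableAt ℂ h c ∧ ∀ᶠ z in 𝓝[≠] c, P z = g c / (z - c) ^ 2 + h z := by
  refine ⟨dslope (dslope g c) c, ?_, ?_⟩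
  · exact ((Complex.differentiableOn_dslope hV).mpr
      ((Complex.differentiableOn_dslope hV).mpr hg)).differentiableAt hV
  · filter_upwards [mem_nhdsWithin_of_mem_nhds hV, self_mem_nhdsWithin] with z hzV hzc
    have hzc' : z - c ≠ 0 := sub_ne_zero.mpr hzc
    rw [dslope_of_ne _ hzc, slope_def_field, dslope_same, hg', dslope_of_ne _ hzc,
      slope_def_field, hgP z hzV hzc]
    field_simp
    ring

section DoublePoles

variable {f : ℂ → ℂ} {S : Finset ℂ} {a : ℂ → ℂ} {φ : ℂ → ℂ → ℂ}

lemma differentiableAt_sum_div_sq {z : ℂ} (T : Finset ℂ) (hz : z ∉ T) :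
    DifferentiableAt ℂ (fun w => ∑ γ ∈ T, a γ / (w - γ) ^ 2) z := by
  refine DifferentiableAt.fun_sum fun γ hγ => ?_
  have : z - γ ≠ 0 := sub_ne_zero.mpr (ne_of_mem_of_not_mem hγ hz).symm
  fun_prop (disch := exact pow_ne_zero 2 this)

theorem exists_differentiableOn_eq_add_sum_div_sq {U : Set ℂ} (hU : IsOpen U)
    (hf : DifferentiableOn ℂ f (U \ S)) (hφ : ∀ γ ∈ S, DifferentiableAt ℂ (φ γ) γ)
    (hpole : ∀ γ ∈ S, ∀ᶠ z in 𝓝[≠] γ, f z = a γ / (z - γ) ^ 2 + φ γ z) :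
    ∃ R : ℂ → ℂ, DifferentiableOn ℂ R U ∧
      ∀ z ∈ U \ S, f z = R z + ∑ γ ∈ S, a γ / (z - γ) ^ 2 := by
  classical
  -- At `z = γ ∈ S` the summand `a γ / (γ - γ) ^ 2` is `a γ / 0 = 0`.
  set R : ℂ → ℂ := fun z => (if z ∈ S then φ z z else f z) - ∑ γ ∈ S, a γ / (z - γ) ^ 2
  refine ⟨R, fun z₀ hz₀ => ?_, fun z hz => by simp [R, show z ∉ S from hz.2]⟩
  refine DifferentiableAt.differentiableWithinAt ?_
  by_cases hz₀S : z₀ ∈ S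
  · have hR : R =ᶠ[𝓝 z₀] fun z => φ z₀ z - ∑ γ ∈ S.erase z₀, a γ / (z - γ) ^ 2 := by
      have hfar : ((S.erase z₀ : Set ℂ))ᶜ ∈ 𝓝 z₀ :=
        (S.erase z₀).finite_toSet.isClosed.isOpen_compl.mem_nhds (by simp)
      filter_upwards [hfar, eventually_nhdsWithin_iff.mp (hpole z₀ hz₀S)] with z hzS hfz
      simp only [R, ← Finset.sum_erase_add S _ hz₀S]
      by_cases hz : z = z₀
      · subst hz
        simp [hz₀S]
      · have hzS' : z ∉ S := fun h => hzS (Finset.mem_erase.mpr ⟨hz, h⟩)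
        rw [if_neg hzS', hfz hz]
        ring
    exact ((hφ z₀ hz₀S).sub
      (differentiableAt_sum_div_sq _ (Finset.notMem_erase z₀ S))).congr_of_eventuallyEq hR
  · have hR : R =ᶠ[𝓝 z₀] fun z => f z - ∑ γ ∈ S, a γ / (z - γ) ^ 2 := by
      filter_upwards [S.finite_toSet.isClosed.isOpen_compl.mem_nhds hz₀S] with z hz
      simp [R, show z ∉ S from hz]
    have hopen : IsOpen (U \ S) := hU.sdiff S.finite_toSet.isClosed
    exact ((hf.differentiableAt (hopen.mem_nhds ⟨hz₀, hz₀S⟩)).sub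
      (differentiableAt_sum_div_sq S hz₀S)).congr_of_eventuallyEq hR

theorem isExactOn_ball_sdiff_of_double_poles {c : ℂ} {r : ℝ}
    (hf : DifferentiableOn ℂ f (ball c r \ S)) (hφ : ∀ γ ∈ S, DifferentiableAt ℂ (φ γ) γ)
    (hpole : ∀ γ ∈ S, ∀ᶠ z in 𝓝[≠] γ, f z = a γ / (z - γ) ^ 2 + φ γ z) :
    IsExactOn f (ball c r \ S) := by
  obtain ⟨R, hR, hfR⟩ := exists_differentiableOn_eq_add_sum_div_sq isOpen_ball hf hφ hpole
  obtain ⟨H, hH⟩ := hR.isExactOn_ball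
  refine ⟨fun z => H z - ∑ γ ∈ S, a γ / (z - γ), fun z hz => ?_⟩
  have hpart : ∀ γ ∈ S, HasDerivAt (fun w => a γ / (w - γ)) (-(a γ / (z - γ) ^ 2)) z := by
    intro γ hγ
    have hzγ : z - γ ≠ 0 := sub_ne_zero.mpr (ne_of_mem_of_not_mem hγ hz.2).symm
    simpa [div_eq_mul_inv] using (((hasDerivAt_id' z).sub_const γ).fun_inv hzγ).const_mul (a γ)
  refine ((hH z hz.1).fun_sub (HasDerivAt.fun_sum hpart)).congr_deriv ?_
  rw [hfR z hz, Finset.sum_neg_distrib, sub_neg_eq_add]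

end DoublePoles

section PeriodicDoublePoles

variable {ω : ℂ} {P : ℂ → ℂ}

lemma eventually_eq_div_sq_add_of_mem_lattice (hω : ω.im ≠ 0)
    (hper1 : ∀ z ∉ lattice ω, P (z + 1) = P z) (hperω : ∀ z ∉ lattice ω, P (z + ω) = P z)
    {a : ℂ} {h : ℂ → ℂ} (hP0 : ∀ᶠ z in 𝓝[≠] 0, P z = a / z ^ 2 + h z) {γ : ℂ}
    (hγ : γ ∈ lattice ω) : ∀ᶠ z in 𝓝[≠] γ, P z = a / (z - γ) ^ 2 + h (z - γ) := by
  have hsub : Tendsto (fun z => z - γ) (𝓝[≠] γ) (𝓝[≠] 0) := by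
    simpa using ((hasDerivAt_id γ).sub_const γ).tendsto_nhdsNE one_ne_zero
  filter_upwards [hsub.eventually hP0, eventually_notMem_lattice hω γ] with z hz hzΓ
  have hzγΓ : z - γ ∉ lattice ω := by rwa [sub_mem_lattice_iff hγ]
  rw [← hz, ← apply_add_of_mem_lattice hper1 hperω hγ hzγΓ, sub_add_cancel]

theorem isExactOn_ball_sdiff_lattice (hω : ω.im ≠ 0)
    (hP : DifferentiableOn ℂ P {z : ℂ | z ∉ lattice ω})
    (hper1 : ∀ z ∉ lattice ω, P (z + 1) = P z) (hperω : ∀ z ∉ lattice ω, P (z + ω) = P z)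
    (hpole : ∃ V ∈ 𝓝 (0:ℂ), ∃ g : ℂ → ℂ, DifferentiableOn ℂ g V ∧
      (∀ z ∈ V, z ≠ 0 → g z = z^2 * P z) ∧ deriv g 0 = 0) (c : ℂ) (r : ℝ) :
    IsExactOn P (ball c r \ lattice ω) := by
  obtain ⟨V, hV, g, hg, hgP, hg'⟩ := hpole
  obtain ⟨h, hh, hP0⟩ := exists_eq_div_sq_add_of_deriv_eq_zero hV hg
    (by simpa only [sub_zero] using hgP) hg'
  simp only [sub_zero] at hP0
  set S := (finite_lattice_inter_ball hω c r).toFinset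
  have hS : ball c r \ S = ball c r \ lattice ω := by
    ext z; simp +contextual [S]
  rw [← hS]
  refine isExactOn_ball_sdiff_of_double_poles (a := fun _ => g 0) (φ := fun γ z => h (z - γ))
    (hP.mono ?_) (fun γ _ => ?_) (fun γ hγ => ?_)
  · rw [hS]; exact fun z hz => hz.2
  · exact differentiableAt_comp_sub_const.mpr (by rwa [sub_self])
  · exact eventually_eq_div_sq_add_of_mem_lattice hω hper1 hperω hP0
      ((finite_lattice_inter_ball hω c r).mem_toFinset.mp hγ).1

end PeriodicDoublePoles

section SegmentIntegral

variable {f G : ℂ → ℂ} {U : Set ℂ}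

lemma intervalIntegrable_comp_segment (hf : ContinuousOn f U) {v w : ℂ}
    (hseg : ∀ t ∈ Icc (0:ℝ) 1, v + t * w ∈ U) :
    IntervalIntegrable (fun t : ℝ => f (v + t * w) * w) volume 0 1 := by
  refine ContinuousOn.intervalIntegrable ?_
  rw [uIcc_of_le zero_le_one]
  exact (hf.comp (by fun_prop : Continuous fun t : ℝ => v + t * w).continuousOn hseg).mul
    continuousOn_const

lemma integral_segment_eq_sub (hG : ∀ z ∈ U, HasDerivAt G (f z) z) (hf : ContinuousOn f U)
    {v w : ℂ} (hseg : ∀ t ∈ Icc (0:ℝ) 1, v + t * w ∈ U) :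
    ∫ t in (0:ℝ)..1, f (v + t * w) * w = G (v + w) - G v := by
  have hderiv : ∀ t ∈ uIcc (0:ℝ) 1,
      HasDerivAt (fun s : ℝ => G (v + s * w)) (f (v + t * w) * w) t := by
    intro t ht
    rw [uIcc_of_le zero_le_one] at ht
    have hline : HasDerivAt (fun s : ℝ => v + s * w) w t := by
      simpa using ((hasDerivAt_id t).ofReal_comp.mul_const w).const_add v
    exact (hG _ (hseg t ht)).comp t hline
  rw [intervalIntegral.integral_eq_sub_of_hasDerivAt hderiv
    (intervalIntegrable_comp_segment hf hseg)]
  simp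

theorem integral_bottom_sub_top_eq_integral_left_sub_right
    (hG : ∀ z ∈ U, HasDerivAt G (f z) z) (hf : ContinuousOn f U) {A w₁ w₂ : ℂ}
    (hbd : ∀ s t : ℝ, s ∈ Icc (0:ℝ) 1 → t ∈ Icc (0:ℝ) 1 → (s = 0 ∨ s = 1 ∨ t = 0 ∨ t = 1) →
      A + s * w₁ + t * w₂ ∈ U) :
    ∫ s in (0:ℝ)..1, (f (A + s * w₁) - f (A + w₂ + s * w₁)) * w₁ =
      ∫ t in (0:ℝ)..1, (f (A + t * w₂) - f (A + w₁ + t * w₂)) * w₂ := by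
  have h0 : (0:ℝ) ∈ Icc (0:ℝ) 1 := left_mem_Icc.mpr zero_le_one
  have h1 : (1:ℝ) ∈ Icc (0:ℝ) 1 := right_mem_Icc.mpr zero_le_one
  have hbot : ∀ s ∈ Icc (0:ℝ) 1, A + s * w₁ ∈ U := fun s hs => by
    simpa using hbd s 0 hs h0 (by simp)
  have htop : ∀ s ∈ Icc (0:ℝ) 1, A + w₂ + s * w₁ ∈ U := fun s hs => by
    simpa [add_right_comm A] using hbd s 1 hs h1 (by simp)
  have hleft : ∀ t ∈ Icc (0:ℝ) 1, A + t * w₂ ∈ U := fun t ht => by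
    simpa using hbd 0 t h0 ht (by simp)
  have hright : ∀ t ∈ Icc (0:ℝ) 1, A + w₁ + t * w₂ ∈ U := fun t ht => by
    simpa using hbd 1 t h1 ht (by simp)
  simp_rw [sub_mul]
  rw [intervalIntegral.integral_sub (intervalIntegrable_comp_segment hf hbot)
      (intervalIntegrable_comp_segment hf htop),
    intervalIntegral.integral_sub (intervalIntegrable_comp_segment hf hleft)
      (intervalIntegrable_comp_segment hf hright),
    integral_segment_eq_sub hG hf hbot, integral_segment_eq_sub hG hf htop,
    integral_segment_eq_sub hG hf hleft, integral_segment_eq_sub hG hf hright,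
    add_right_comm A w₂ w₁]
  ring

end SegmentIntegral

/-- Let `P` be holomorphic and `Γ`-periodic on `ℂ∖Γ`, with `z²·P(z)` extending
holomorphically near `0` with vanishing derivative at `0` (pole of order at most two with
vanishing residue at each lattice point). If the boundary of the parallelogram
`Q = {ξ − p1 + s·ωk + t·(p1 − p2) : s, t ∈ [0,1]}` (with `ωk ∈ {1, ω}`) avoids `Γ`, then
`∫_{[ξ, ξ+ωk]} (P(ζ−p1) − P(ζ−p2)) dζ = 0`. -/
theorem stmt_7 (ω : ℂ) (hω : ω.im ≠ 0) (P : ℂ → ℂ)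
    (hP : DifferentiableOn ℂ P {z : ℂ | z ∉ lattice ω})
    (hper1 : ∀ z ∉ lattice ω, P (z + 1) = P z)
    (hperω : ∀ z ∉ lattice ω, P (z + ω) = P z)
    (hpole : ∃ V ∈ nhds (0:ℂ), ∃ g : ℂ → ℂ, DifferentiableOn ℂ g V ∧
      (∀ z ∈ V, z ≠ 0 → g z = z^2 * P z) ∧ deriv g 0 = 0)
    (p1 p2 ξ ωk : ℂ) (hωk : ωk = 1 ∨ ωk = ω)
    (hbd : ∀ s t : ℝ, s ∈ Set.Icc (0:ℝ) 1 → t ∈ Set.Icc (0:ℝ) 1 →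
      (s = 0 ∨ s = 1 ∨ t = 0 ∨ t = 1) →
      (ξ - p1 + (s : ℂ) * ωk + (t : ℂ) * (p1 - p2)) ∉ lattice ω) :
    ∫ t in (0:ℝ)..1,
      (P (ξ + (t : ℂ) * ωk - p1) - P (ξ + (t : ℂ) * ωk - p2)) * ωk = 0 := by
  have hQ : IsCompact ((fun p : ℝ × ℝ => ξ - p1 + (p.1 : ℂ) * ωk + (p.2 : ℂ) * (p1 - p2)) ''
      Icc 0 1 ×ˢ Icc 0 1) :=
    (isCompact_Icc.prod isCompact_Icc).image (by fun_prop)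
  obtain ⟨r, hr⟩ := hQ.isBounded.subset_ball 0
  obtain ⟨G, hG⟩ := isExactOn_ball_sdiff_lattice hω hP hper1 hperω hpole 0 r
  have hPc : ContinuousOn P (ball 0 r \ lattice ω) := hP.continuousOn.mono fun z hz => hz.2
  have hωkΓ : ωk ∈ lattice ω := by
    rcases hωk with rfl | rfl
    exacts [one_mem_lattice, mem_lattice_self]
  calc _ = ∫ t in (0:ℝ)..1,
        (P (ξ - p1 + t * ωk) - P (ξ - p1 + (p1 - p2) + t * ωk)) * ωk := by
        congr 1; ext t; ring_nf
    _ = ∫ t in (0:ℝ)..1,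
        (P (ξ - p1 + t * (p1 - p2)) - P (ξ - p1 + ωk + t * (p1 - p2))) * (p1 - p2) :=
        integral_bottom_sub_top_eq_integral_left_sub_right hG hPc
          fun s t hs ht hst => ⟨hr (mem_image_of_mem _ (mk_mem_prod hs ht)), hbd s t hs ht hst⟩
    _ = 0 := by
        refine (intervalIntegral.integral_congr fun t ht => ?_).trans intervalIntegral.integral_zero
        rw [uIcc_of_le zero_le_one] at ht
        have hleft : ξ - p1 + t * (p1 - p2) ∉ lattice ω := by
          simpa using hbd 0 t (left_mem_Icc.mpr zero_le_one) ht (by simp)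
        simp only [add_right_comm (ξ - p1) ωk, apply_add_of_mem_lattice hper1 hperω hωkΓ hleft,
          sub_self, zero_mul]
end

section
/- Fix ω ∈ ℂ with ω ∉ ℝ, let Γ = {m + nω : m, n ∈ ℤ}, and let p1, p2 ∈ ℂ with p1 − p2 ∉ Γ. Let P : ℂ∖Γ → ℂ be holomorphic and Γ-periodic such that z ↦ P(z) − z^{−2} extends holomorphically to a neighborhood of 0 (P has principal part exactly 1/z² at each lattice point). Then there exists a holomorphic, Γ-periodic function w̃ : ℂ∖((p1+Γ) ∪ (p2+Γ)) → ℂ with w̃′(z) = P(z − p1) − P(z − p2) for all z in its domain, and w̃ has a simple pole at p1 with residue −1 and a simple pole at p2 with residue +1. -/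
/-!
With `Λ` the lattice and `℘` its Weierstrass function, `P - ℘` is `Λ`-periodic and its
singularities are removable, so it is bounded and entire, hence constant by Liouville.
A primitive of `℘(z - p₁) - ℘(z - p₂)` is then `ζ(z - p₂) - ζ(z - p₁)`, where
`ζ(z) = 1/z + ∑_{l ≠ 0} (1/(z - l) + 1/l + z/l²)` is the Weierstrass `ζ`-function: `ζ' = -℘`
and `ζ - 1/z` is holomorphic at `0`, which gives the residues. Since `℘` is periodic,
`ζ(z + l) - ζ(z)` has zero derivative on the connected set `ℂ ∖ Λ`, so it does not depend on `z`
and the two quasi-periods cancel in the difference.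
-/

open Complex Metric Set

/-- The complement of `(p1 + Γ) ∪ (p2 + Γ)` in `ℂ`. -/
def latDom (ω p1 p2 : ℂ) : Set ℂ := {z : ℂ | z - p1 ∉ lattice ω ∧ z - p2 ∉ lattice ω}

open Filter Topology

noncomputable section

def HasSimplePoleAt (F : ℂ → ℂ) (p r : ℂ) : Prop :=
  ∃ U ∈ 𝓝 p, ∃ g : ℂ → ℂ, DifferentiableOn ℂ g U ∧ (∀ z ∈ U, z ≠ p → g z = (z - p) * F z) ∧
    g p = r

namespace PeriodPair

variable (L : PeriodPair)

def zetaSummand (l z : ℂ) : ℂ := 1 / (z - l) + 1 / l + z / l ^ 2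

lemma norm_zetaSummand_le {r : ℝ} (hr : 0 < r) {z : ℂ} (hz : ‖z‖ < r) {l : ℂ} (hl : 2 * r ≤ ‖l‖) :
    ‖zetaSummand l z‖ ≤ 2 * r ^ 2 * ‖l‖ ^ (-3 : ℝ) := by
  have hl0 : 0 < ‖l‖ := by linarith
  have hzl : ‖l‖ / 2 ≤ ‖z - l‖ := by
    rw [norm_sub_rev]; linarith [norm_sub_norm_le l z]
  have hz_ne : z - l ≠ 0 := norm_pos_iff.mp (by linarith)
  have hl_ne : l ≠ 0 := norm_pos_iff.mp hl0
  calc ‖zetaSummand l z‖ = ‖z‖ ^ 2 / (‖l‖ ^ 2 * ‖z - l‖) := by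
        have hsummand : zetaSummand l z = z ^ 2 / (l ^ 2 * (z - l)) := by
          simp only [zetaSummand]; field_simp; ring
        simp [hsummand]
    _ ≤ r ^ 2 / (‖l‖ ^ 2 * (‖l‖ / 2)) := by gcongr
    _ = 2 * r ^ 2 * ‖l‖ ^ (-3 : ℝ) := by
        rw [Real.rpow_neg hl0.le]; norm_cast; field_simp

def weierstrassZetaExcept (l₀ z : ℂ) : ℂ :=
  ∑' l : L.lattice, if l.1 = l₀ then 0 else zetaSummand l z

lemma hasSumLocallyUniformly_weierstrassZetaExcept (l₀ : ℂ) :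
    HasSumLocallyUniformly
      (fun (l : L.lattice) (z : ℂ) ↦ if l.1 = l₀ then 0 else zetaSummand l z)
      (L.weierstrassZetaExcept l₀) := by
  refine L.hasSumLocallyUniformly_aux (u := (2 * · ^ 2 * ‖·‖ ^ (-3 : ℝ))) _
    (fun _ _ ↦ (ZLattice.summable_norm_rpow _ _ (by simp; norm_num)).mul_left _) fun r hr ↦
    eventually_atTop.mpr ⟨2 * r, ?_⟩
  rintro _ h z hz l rfl
  split_ifs
  · simp only [norm_zero]; positivity
  · exact norm_zetaSummand_le hr hz h

lemma hasDerivAt_zetaSummand {l z : ℂ} (hz : z ≠ l) :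
    HasDerivAt (zetaSummand l) (-(1 / (z - l) ^ 2 - 1 / l ^ 2)) z := by
  have h := ((((hasDerivAt_id' z).sub_const l).inv (sub_ne_zero.mpr hz)).add_const (1 / l)).fun_add
    ((hasDerivAt_id' z).div_const (l ^ 2))
  unfold zetaSummand
  simp only [one_div] at h ⊢
  exact h.congr_deriv (by ring)

lemma hasDerivAt_weierstrassZetaExcept (l₀ : ℂ) {z : ℂ} (hz : z ∉ (L.lattice \ {l₀} : Set ℂ)) :
    HasDerivAt (L.weierstrassZetaExcept l₀) (-℘[L - l₀] z) z := by
  refine hasDerivAt_of_tendstoLocallyUniformlyOn L.isOpen_compl_lattice_sdiff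
    (L.hasSumLocallyUniformly_weierstrassPExcept l₀).tendstoLocallyUniformlyOn.neg
    (.of_forall fun s w hw ↦ ?_)
    (fun w _ ↦ (L.hasSumLocallyUniformly_weierstrassZetaExcept l₀).hasSum) hz
  simp only [Pi.neg_apply, ← Finset.sum_neg_distrib]
  refine HasDerivAt.fun_sum fun l _ ↦ ?_
  split_ifs with hl
  · simp [hasDerivAt_const]
  · exact hasDerivAt_zetaSummand fun hwl ↦ hw ⟨hwl ▸ l.2, hwl ▸ hl⟩

def weierstrassZeta (z : ℂ) : ℂ := z⁻¹ + L.weierstrassZetaExcept 0 z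

lemma hasDerivAt_weierstrassZeta {z : ℂ} (hz : z ∉ L.lattice) :
    HasDerivAt L.weierstrassZeta (-℘[L] z) z := by
  have hz0 : z ≠ 0 := fun h ↦ hz (h ▸ zero_mem _)
  have h := (hasDerivAt_inv hz0).add
    (L.hasDerivAt_weierstrassZetaExcept 0 (fun h ↦ hz h.1))
  rw [L.weierstrassPExcept_def ⟨0, zero_mem _⟩] at h
  exact h.congr_deriv (by simp)

lemma weierstrassZeta_add_sub_eq {l x y : ℂ} (hl : l ∈ L.lattice) (hx : x ∉ L.lattice)
    (hy : y ∉ L.lattice) :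
    L.weierstrassZeta (x + l) - L.weierstrassZeta x =
      L.weierstrassZeta (y + l) - L.weierstrassZeta y := by
  have hderiv : ∀ z ∉ L.lattice,
      HasDerivAt (fun z ↦ L.weierstrassZeta (z + l) - L.weierstrassZeta z) 0 z := fun z hz ↦ by
    have hzl : z + l ∉ L.lattice := fun h ↦ hz (by simpa using sub_mem h hl)
    refine ((L.hasDerivAt_weierstrassZeta hzl).comp_add_const z l |>.sub
      (L.hasDerivAt_weierstrassZeta hz)).congr_deriv ?_
    rw [L.weierstrassP_add_coe z ⟨l, hl⟩, neg_sub_neg, sub_self]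
  have hconn : IsConnected (L.lattice : Set ℂ)ᶜ :=
    Set.Countable.isConnected_compl_of_one_lt_rank (by simp)
      (countable_of_Lindelof_of_discrete (X := L.lattice))
  exact L.isClosed_lattice.isOpen_compl.is_const_of_deriv_eq_zero hconn.isPreconnected
    (fun z hz ↦ (hderiv z hz).differentiableAt.differentiableWithinAt)
    (fun z hz ↦ (hderiv z hz).deriv) hx hy

lemma eventually_differentiableAt_weierstrassZeta_sub {a b : ℂ} (hab : a - b ∉ L.lattice) :
    ∀ᶠ z in 𝓝 a, DifferentiableAt ℂ (fun z ↦ L.weierstrassZeta (z - b)) z := by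
  have hopen : IsOpen {z : ℂ | z - b ∉ L.lattice} :=
    L.isClosed_lattice.isOpen_compl.preimage (continuous_sub_right b)
  filter_upwards [hopen.mem_nhds hab] with z hz
  exact ((L.hasDerivAt_weierstrassZeta hz).comp_sub_const z b).differentiableAt

lemma hasSimplePoleAt_add_mul_weierstrassZeta_sub {G : ℂ → ℂ} {a : ℂ}
    (hG : ∀ᶠ z in 𝓝 a, DifferentiableAt ℂ G z) (c : ℂ) :
    HasSimplePoleAt (fun z ↦ G z + c * L.weierstrassZeta (z - a)) a c := by
  have hreg : ∀ᶠ z in 𝓝 a, DifferentiableAt ℂ (L.weierstrassZetaExcept 0) (z - a) := by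
    have h0 : ∀ᶠ w in 𝓝 0, DifferentiableAt ℂ (L.weierstrassZetaExcept 0) w := by
      filter_upwards [L.compl_lattice_sdiff_singleton_mem_nhds 0] with w hw
      exact (L.hasDerivAt_weierstrassZetaExcept 0 hw).differentiableAt
    exact (continuous_sub_right a).tendsto' a 0 (sub_self a) |>.eventually h0
  refine ⟨_, hG.and hreg, fun z ↦ (z - a) * (G z + c * L.weierstrassZetaExcept 0 (z - a)) + c,
    fun z hz ↦ ?_, fun z _ hza ↦ ?_, by simp⟩
  · have := hz.2.comp z (differentiableAt_id.sub_const a)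
    exact (((differentiableAt_id.sub_const a).mul
      (hz.1.add (this.const_mul c))).add_const c).differentiableWithinAt
  · have : z - a ≠ 0 := sub_ne_zero.mpr hza
    simp only [weierstrassZeta]
    field_simp
    ring

lemma hasSimplePoleAt_weierstrassZeta_sub_sub_left {a b : ℂ} (hab : a - b ∉ L.lattice) :
    HasSimplePoleAt (fun z ↦ L.weierstrassZeta (z - b) - L.weierstrassZeta (z - a)) a (-1) := by
  simpa [sub_eq_add_neg] using L.hasSimplePoleAt_add_mul_weierstrassZeta_sub
    (L.eventually_differentiableAt_weierstrassZeta_sub hab) (-1)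

lemma hasSimplePoleAt_weierstrassZeta_sub_sub_right {a b : ℂ} (hab : a - b ∉ L.lattice) :
    HasSimplePoleAt (fun z ↦ L.weierstrassZeta (z - b) - L.weierstrassZeta (z - a)) b 1 := by
  have hba : b - a ∉ L.lattice := fun h ↦ hab (by simpa using neg_mem h)
  simpa [sub_eq_neg_add] using L.hasSimplePoleAt_add_mul_weierstrassZeta_sub
    ((L.eventually_differentiableAt_weierstrassZeta_sub hba).mono fun _ h ↦ h.neg) 1

lemma periodic_of_mem_lattice {α : Type*} {F : ℂ → α} (h₁ : Function.Periodic F L.ω₁)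
    (h₂ : Function.Periodic F L.ω₂) {l : ℂ} (hl : l ∈ L.lattice) : Function.Periodic F l := by
  induction hl using Submodule.span_induction with
  | mem x hx => rcases hx with rfl | rfl; exacts [h₁, h₂]
  | zero => exact fun z ↦ by rw [add_zero]
  | add x y _ _ hx hy => exact hx.add_period hy
  | smul n x _ hx => exact hx.zsmul n

lemma isBounded_range_of_periodic {X : Type*} [PseudoMetricSpace X] {F : ℂ → X}
    (hF : Continuous F) (h₁ : Function.Periodic F L.ω₁) (h₂ : Function.Periodic F L.ω₂) :
    Bornology.IsBounded (range F) := by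
  refine ((isCompact_closedBall (0 : ℂ) (∑ i, ‖L.basis i‖)).image hF).isBounded.subset ?_
  rintro _ ⟨z, rfl⟩
  refine ⟨ZSpan.fract L.basis z, mem_closedBall_zero_iff.mpr (ZSpan.norm_fract_le _ _), ?_⟩
  have hfloor : (ZSpan.floor L.basis z : ℂ) ∈ L.lattice := by
    rw [L.lattice_eq_span_range_basis]; exact (ZSpan.floor L.basis z).2
  exact (L.periodic_of_mem_lattice h₁ h₂ hfloor).sub_eq z

lemma apply_eq_apply_of_periodic {E : Type*} [NormedAddCommGroup E] [NormedSpace ℂ E]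
    {F : ℂ → E} (hF : Differentiable ℂ F) (h₁ : Function.Periodic F L.ω₁)
    (h₂ : Function.Periodic F L.ω₂) (z w : ℂ) : F z = F w :=
  hF.apply_eq_apply_of_bounded (L.isBounded_range_of_periodic hF.continuous h₁ h₂) z w

lemma eq_of_periodic_of_removable {F : ℂ → ℂ} (hF : DifferentiableOn ℂ F L.latticeᶜ)
    (h₁ : ∀ z ∉ L.lattice, F (z + L.ω₁) = F z) (h₂ : ∀ z ∉ L.lattice, F (z + L.ω₂) = F z)
    {g : ℂ → ℂ} (hg : DifferentiableAt ℂ g 0) (hgF : ∀ᶠ z in 𝓝[≠] 0, g z = F z) :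
    ∀ z ∉ L.lattice, F z = g 0 := by
  classical
  set H : ℂ → ℂ := fun z ↦ if z ∈ L.lattice then g 0 else F z
  have hH_periodic {c : ℂ} (hc : c ∈ L.lattice) (hFc : ∀ z ∉ L.lattice, F (z + c) = F z) :
      Function.Periodic H c := fun z ↦ by
    by_cases hz : z ∈ L.lattice
    · simp [H, hz, add_mem hz hc]
    · have hzc : z + c ∉ L.lattice := fun h ↦ hz (by simpa using sub_mem h hc)
      simp [H, hz, hzc, hFc z hz]
  have hH₁ := hH_periodic L.ω₁_mem_lattice h₁
  have hH₂ := hH_periodic L.ω₂_mem_lattice h₂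
  have hH0 : H =ᶠ[𝓝 0] g := by
    filter_upwards [eventually_nhdsWithin_iff.mp hgF, L.compl_lattice_sdiff_singleton_mem_nhds 0]
      with z hgz hz
    by_cases hz0 : z = 0
    · simp [H, hz0]
    · have : z ∉ L.lattice := fun h ↦ hz ⟨h, hz0⟩
      simp [H, this, hgz hz0]
  have hH : Differentiable ℂ H := fun z ↦ by
    by_cases hz : z ∈ L.lattice
    · have hshift : H = fun w ↦ H (w - z) :=
        funext fun w ↦ ((L.periodic_of_mem_lattice hH₁ hH₂ hz).sub_eq w).symm
      rw [hshift]
      have hH0' : DifferentiableAt ℂ H (z - z) := by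
        rw [sub_self]; exact hH0.differentiableAt_iff.mpr hg
      exact hH0'.comp (f := fun w ↦ w - z) z (differentiableAt_id.sub_const z)
    · have hFH : H =ᶠ[𝓝 z] F := by
        filter_upwards [L.isClosed_lattice.isOpen_compl.mem_nhds hz] with w hw
        simp [H, show w ∉ L.lattice from hw]
      exact hFH.differentiableAt_iff.mpr
        (hF.differentiableAt (L.isClosed_lattice.isOpen_compl.mem_nhds hz))
  intro z hz
  calc F z = H z := by simp [H, hz]
    _ = H 0 := L.apply_eq_apply_of_periodic hH hH₁ hH₂ z 0
    _ = g 0 := by simp [H]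

lemma exists_eq_weierstrassP_add_const {P : ℂ → ℂ} (hP : DifferentiableOn ℂ P L.latticeᶜ)
    (h₁ : ∀ z ∉ L.lattice, P (z + L.ω₁) = P z) (h₂ : ∀ z ∉ L.lattice, P (z + L.ω₂) = P z)
    (hpp : ∃ V ∈ 𝓝 (0 : ℂ), ∃ g : ℂ → ℂ, DifferentiableOn ℂ g V ∧
      ∀ z ∈ V, z ≠ 0 → g z = P z - 1 / z ^ 2) :
    ∃ c, ∀ z ∉ L.lattice, P z = ℘[L] z + c := by
  obtain ⟨V, hV, g, hg, hgP⟩ := hpp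
  have hperiodic {c : ℂ} (hc : c ∈ L.lattice) (hPc : ∀ z ∉ L.lattice, P (z + c) = P z)
      (z : ℂ) (hz : z ∉ L.lattice) : P (z + c) - ℘[L] (z + c) = P z - ℘[L] z := by
    rw [hPc z hz, L.weierstrassP_add_coe z ⟨c, hc⟩]
  have hconst := L.eq_of_periodic_of_removable (F := fun z ↦ P z - ℘[L] z)
    (g := fun z ↦ g z - L.weierstrassPExcept 0 z) (hP.sub L.differentiableOn_weierstrassP)
    (hperiodic L.ω₁_mem_lattice h₁) (hperiodic L.ω₂_mem_lattice h₂)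
    ((hg.differentiableAt hV).sub ((L.differentiableOn_weierstrassPExcept 0).differentiableAt
      (L.compl_lattice_sdiff_singleton_mem_nhds 0))) ?_
  · exact ⟨_, fun z hz ↦ eq_add_of_sub_eq' (hconst z hz)⟩
  · filter_upwards [self_mem_nhdsWithin, nhdsWithin_le_nhds hV] with z hz0 hzV
    rw [hgP z hzV hz0, L.weierstrassPExcept_def ⟨0, zero_mem _⟩]
    simp
    ring

lemma weierstrassZeta_sub_sub_add {a b l z : ℂ} (hl : l ∈ L.lattice) (ha : z - a ∉ L.lattice)
    (hb : z - b ∉ L.lattice) :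
    L.weierstrassZeta (z + l - b) - L.weierstrassZeta (z + l - a) =
      L.weierstrassZeta (z - b) - L.weierstrassZeta (z - a) := by
  rw [add_sub_right_comm, add_sub_right_comm z l a]
  linear_combination L.weierstrassZeta_add_sub_eq hl hb ha

lemma hasDerivAt_weierstrassZeta_sub_sub {a b z : ℂ} (ha : z - a ∉ L.lattice)
    (hb : z - b ∉ L.lattice) :
    HasDerivAt (fun z ↦ L.weierstrassZeta (z - b) - L.weierstrassZeta (z - a))
      (℘[L] (z - a) - ℘[L] (z - b)) z :=
  (((L.hasDerivAt_weierstrassZeta hb).comp_sub_const z b).sub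
    ((L.hasDerivAt_weierstrassZeta ha).comp_sub_const z a)).congr_deriv (by ring)

def ofOmega (ω : ℂ) (hω : ω.im ≠ 0) : PeriodPair where
  ω₁ := 1
  ω₂ := ω
  indep := LinearIndependent.pair_iff.mpr fun s t h ↦ by
    have him := congrArg Complex.im h
    have hre := congrArg Complex.re h
    simp only [Complex.real_smul, Complex.mul_im, Complex.mul_re, Complex.ofReal_re,
      Complex.ofReal_im, Complex.add_im, Complex.add_re, Complex.one_re, Complex.one_im,
      Complex.zero_im, Complex.zero_re] at him hre
    have ht : t = 0 := by simpa [hω] using him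
    exact ⟨by simpa [ht] using hre, ht⟩

lemma coe_lattice_ofOmega (ω : ℂ) (hω : ω.im ≠ 0) :
    ((ofOmega ω hω).lattice : Set ℂ) = _root_.lattice ω := by
  ext z
  simp [mem_lattice, _root_.lattice, ofOmega, eq_comm]

end PeriodPair

end

/-- Let `P` be `Γ`-periodic holomorphic on `ℂ∖Γ` with principal part exactly
`1/z²` at each lattice point (`P(z) − z⁻²` extends holomorphically near `0`). Then there is a
`Γ`-periodic holomorphic function `w̃` on `ℂ∖((p1+Γ) ∪ (p2+Γ))` with
`w̃′(z) = P(z−p1) − P(z−p2)`, having a simple pole of residue `−1` at `p1` and a simple pole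
of residue `+1` at `p2`. -/
theorem stmt_10 (ω : ℂ) (hω : ω.im ≠ 0) (p1 p2 : ℂ) (hp : p1 - p2 ∉ lattice ω)
    (P : ℂ → ℂ)
    (hP : DifferentiableOn ℂ P {z : ℂ | z ∉ lattice ω})
    (hPper1 : ∀ z ∉ lattice ω, P (z + 1) = P z)
    (hPperω : ∀ z ∉ lattice ω, P (z + ω) = P z)
    (hPpp : ∃ V ∈ nhds (0:ℂ), ∃ g : ℂ → ℂ, DifferentiableOn ℂ g V ∧
      ∀ z ∈ V, z ≠ 0 → g z = P z - 1 / z^2) :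
    ∃ wt : ℂ → ℂ,
      DifferentiableOn ℂ wt (latDom ω p1 p2) ∧
      (∀ z ∈ latDom ω p1 p2, wt (z + 1) = wt z) ∧
      (∀ z ∈ latDom ω p1 p2, wt (z + ω) = wt z) ∧
      (∀ z ∈ latDom ω p1 p2, HasDerivAt wt (P (z - p1) - P (z - p2)) z) ∧
      (∃ U ∈ nhds p1, ∃ g : ℂ → ℂ, DifferentiableOn ℂ g U ∧
        (∀ z ∈ U, z ≠ p1 → g z = (z - p1) * wt z) ∧ g p1 = -1) ∧
      (∃ U ∈ nhds p2, ∃ g : ℂ → ℂ, DifferentiableOn ℂ g U ∧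
        (∀ z ∈ U, z ≠ p2 → g z = (z - p2) * wt z) ∧ g p2 = 1) := by
  let L := PeriodPair.ofOmega ω hω
  have hΓ : lattice ω = L.lattice := (PeriodPair.coe_lattice_ofOmega ω hω).symm
  rw [hΓ] at hp hP hPper1 hPperω
  obtain ⟨c, hc⟩ := L.exists_eq_weierstrassP_add_const hP hPper1 hPperω hPpp
  have hderiv {z : ℂ} (hz : z ∈ latDom ω p1 p2) :
      HasDerivAt (fun z ↦ L.weierstrassZeta (z - p2) - L.weierstrassZeta (z - p1))
        (P (z - p1) - P (z - p2)) z := by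
    rw [latDom, hΓ] at hz
    refine (L.hasDerivAt_weierstrassZeta_sub_sub hz.1 hz.2).congr_deriv ?_
    rw [hc _ hz.1, hc _ hz.2]
    ring
  refine ⟨_, fun z hz ↦ (hderiv hz).differentiableAt.differentiableWithinAt,
    fun z hz ↦ ?_, fun z hz ↦ ?_, fun z hz ↦ hderiv hz,
    L.hasSimplePoleAt_weierstrassZeta_sub_sub_left hp,
    L.hasSimplePoleAt_weierstrassZeta_sub_sub_right hp⟩ <;> rw [latDom, hΓ] at hz
  · exact L.weierstrassZeta_sub_sub_add L.ω₁_mem_lattice hz.1 hz.2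
  · exact L.weierstrassZeta_sub_sub_add L.ω₂_mem_lattice hz.1 hz.2
end

section
/- Fix ω ∈ ℂ with ω ∉ ℝ, let Γ = {m + nω : m, n ∈ ℤ}, and let p1, p2 ∈ ℂ with p1 − p2 ∉ Γ. Let P1, P2 : ℂ∖((p1+Γ) ∪ (p2+Γ)) → ℂ be Γ-periodic functions such that for l = 1, 2: P_l is holomorphic on ℂ∖(p_l+Γ), the function z ↦ P_l(z) − (z−p_l)^{−2} extends holomorphically across p_l (principal part exactly 1/(z−p_l)²), and P_l(p_{3−l}) = 0. Let w : ℂ∖((p1+Γ) ∪ (p2+Γ)) → ℂ be holomorphic and Γ-periodic with a simple pole at p1 with residue 1 and a simple pole at p2 with residue −1. If A, B, C, D, E, F, G, H, J, K ∈ ℂ satisfy A·P1² + B·P2² + C·P1·w + D·P2·w + E·P1 + F·P2 + G·w² + H·P1·P2 + J·w + K = 0 on ℂ∖((p1+Γ) ∪ (p2+Γ)), then A = B = 0, C = D = 0, E + G = 0, and F + G = 0. -/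
/-!
Multiply the relation by `(z - p₁)⁴`, `(z - p₁)³`, `(z - p₁)²` in turn and let `z → p₁`:
since `(z - p₁)² P₁ → 1`, `(z - p₁) w → 1` and `P₂ → P₂ p₁ = 0`, the three limits are `A`, then
(once `A = 0`) `C`, then (once `C = 0`) `E + G`, and all must vanish. At `p₂`, where the residue
of `w` is `-1`, the same argument gives `B`, `D` and `F + G`. The lattice only enters through its
discreteness, which makes the relation hold on a punctured neighbourhood of each `p_l`.
-/

open Complex Metric Set

open Filter Topology

def periodPairOfImNeZero {ω : ℂ} (hω : ω.im ≠ 0) : PeriodPair where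
  ω₁ := 1
  ω₂ := ω
  indep := by
    rw [LinearIndependent.pair_iff' one_ne_zero]
    intro a h
    apply hω
    simp [← h]

lemma lattice_eq_periodPair_lattice {ω : ℂ} (hω : ω.im ≠ 0) :
    lattice ω = (periodPairOfImNeZero hω).lattice := by
  ext z
  simp only [lattice, mem_ofPred_eq, SetLike.mem_coe, PeriodPair.mem_lattice,
    periodPairOfImNeZero, mul_one, eq_comm]

lemma isOpen_setOf_sub_notMem_lattice {ω : ℂ} (hω : ω.im ≠ 0) (p : ℂ) :
    IsOpen {z : ℂ | z - p ∉ lattice ω} := by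
  rw [lattice_eq_periodPair_lattice hω]
  exact (PeriodPair.isClosed_lattice _).isOpen_compl.preimage (continuous_sub_right p)

lemma eventually_sub_notMem_lattice {ω : ℂ} (hω : ω.im ≠ 0) (a p : ℂ) :
    ∀ᶠ z in 𝓝[≠] a, z - p ∉ lattice ω := by
  have hnhds := (continuous_sub_right p).continuousAt.preimage_mem_nhds
    ((periodPairOfImNeZero hω).compl_lattice_sdiff_singleton_mem_nhds (a - p))
  filter_upwards [nhdsWithin_le_nhds hnhds, self_mem_nhdsWithin] with z hz hza
  rw [lattice_eq_periodPair_lattice hω]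
  exact fun h ↦ hz ⟨h, fun h' ↦ hza (sub_left_injective h')⟩

lemma eventually_mem_latDom {ω : ℂ} (hω : ω.im ≠ 0) (p1 p2 a : ℂ) :
    ∀ᶠ z in 𝓝[≠] a, z ∈ latDom ω p1 p2 :=
  (eventually_sub_notMem_lattice hω a p1).and (eventually_sub_notMem_lattice hω a p2)

lemma neg_mem_lattice {ω z : ℂ} (hz : z ∈ lattice ω) : -z ∈ lattice ω := by
  obtain ⟨m, n, rfl⟩ := hz
  exact ⟨-m, -n, by push_cast; ring⟩

lemma tendsto_nhdsNE_of_differentiableOn {ω : ℂ} (hω : ω.im ≠ 0) {P : ℂ → ℂ} {p q : ℂ}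
    (hP : DifferentiableOn ℂ P {z : ℂ | z - p ∉ lattice ω}) (hq : q - p ∉ lattice ω) :
    Tendsto P (𝓝[≠] q) (𝓝 (P q)) :=
  (hP.differentiableAt ((isOpen_setOf_sub_notMem_lattice hω p).mem_nhds hq)).continuousAt.tendsto
    |>.mono_left nhdsWithin_le_nhds

lemma tendsto_sub_sq_mul_of_principalPart {p : ℂ} {P : ℂ → ℂ}
    (hpp : ∃ U ∈ 𝓝 p, ∃ g : ℂ → ℂ, DifferentiableOn ℂ g U ∧
      ∀ z ∈ U, z ≠ p → g z = P z - 1 / (z - p) ^ 2) :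
    Tendsto (fun z ↦ (z - p) ^ 2 * P z) (𝓝[≠] p) (𝓝 1) := by
  obtain ⟨U, hU, g, hg, hgP⟩ := hpp
  have hgc : ContinuousAt g p := (hg.differentiableAt hU).continuousAt
  have hlim : Tendsto (fun z ↦ (z - p) ^ 2 * g z + 1) (𝓝[≠] p) (𝓝 1) := by
    have hc : ContinuousAt (fun z ↦ (z - p) ^ 2 * g z + 1) p := by fun_prop
    simpa using hc.tendsto.mono_left nhdsWithin_le_nhds
  refine hlim.congr' ?_
  filter_upwards [nhdsWithin_le_nhds hU, self_mem_nhdsWithin] with z hzU hzp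
  rw [hgP z hzU hzp]
  field_simp [sub_ne_zero.mpr hzp]
  ring

lemma tendsto_sub_mul_of_simplePole {p r : ℂ} {w : ℂ → ℂ}
    (hwp : ∃ U ∈ 𝓝 p, ∃ g : ℂ → ℂ, DifferentiableOn ℂ g U ∧
      (∀ z ∈ U, z ≠ p → g z = (z - p) * w z) ∧ g p = r) :
    Tendsto (fun z ↦ (z - p) * w z) (𝓝[≠] p) (𝓝 r) := by
  obtain ⟨U, hU, g, hg, hgw, rfl⟩ := hwp
  refine ((hg.differentiableAt hU).continuousAt.tendsto.mono_left nhdsWithin_le_nhds).congr' ?_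
  filter_upwards [nhdsWithin_le_nhds hU, self_mem_nhdsWithin] with z hzU hzp
  exact hgw z hzU hzp

def ternaryQuadratic {R : Type*} [CommRing R] (A B C D E F G H J K x y t : R) : R :=
  A * x ^ 2 + B * y ^ 2 + C * x * t + D * y * t + E * x + F * y + G * t ^ 2 + H * x * y
    + J * t + K

lemma ternaryQuadratic_swap {R : Type*} [CommRing R] (A B C D E F G H J K x y t : R) :
    ternaryQuadratic A B C D E F G H J K x y t = ternaryQuadratic B A D C F E G H J K y x t := by
  unfold ternaryQuadratic; ring

lemma eq_zero_of_eventually_add_mul_eq_zero {α R : Type*} [Semiring R] [TopologicalSpace R]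
    [IsTopologicalSemiring R] [T2Space R] {l : Filter α} [l.NeBot] {f g u : α → R} {a b : R} (hf : Tendsto f l (𝓝 a)) (hg : Tendsto g l (𝓝 b))
    (hu : Tendsto u l (𝓝 0)) (h : ∀ᶠ z in l, f z + u z * g z = 0) : a = 0 := by
  have hlim := hf.add (hu.mul hg)
  rw [zero_mul, add_zero] at hlim
  exact tendsto_nhds_unique hlim (tendsto_const_nhds.congr' (EventuallyEq.symm h))

section

variable {𝕜 : Type*} [Field 𝕜] [TopologicalSpace 𝕜] [IsTopologicalRing 𝕜] [T2Space 𝕜]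
  {A B C D E F G H J K : 𝕜}

lemma coeffs_eq_zero_of_eventually_ternaryQuadratic_eq_zero {α : Type*} {l : Filter α} [l.NeBot]
    {u P Q w : α → 𝕜} {r : 𝕜} (hr : r ≠ 0)
    (hu : Tendsto u l (𝓝 0)) (hu0 : ∀ᶠ z in l, u z ≠ 0)
    (hP : Tendsto (fun z ↦ u z ^ 2 * P z) l (𝓝 1)) (hQ : Tendsto Q l (𝓝 0))
    (hw : Tendsto (fun z ↦ u z * w z) l (𝓝 r))
    (h : ∀ᶠ z in l, ternaryQuadratic A B C D E F G H J K (P z) (Q z) (w z) = 0) :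
    A = 0 ∧ C = 0 ∧ E + G * r ^ 2 = 0 := by
  set x := fun z ↦ u z ^ 2 * P z
  set t := fun z ↦ u z * w z
  set c4 := fun z ↦ B * Q z ^ 2 + F * Q z + K
  set c3 := fun z ↦ D * Q z * t z + J * t z + u z * c4 z
  set c2 := fun z ↦ E * x z + G * t z ^ 2 + H * x z * Q z + u z * c3 z
  set c1 := fun z ↦ C * x z * t z + u z * c2 z
  have hc4 : Tendsto c4 l _ :=
    ((hQ.pow 2).const_mul B).add (hQ.const_mul F) |>.add (tendsto_const_nhds (x := K))
  have hc3 : Tendsto c3 l _ := ((hQ.const_mul D).mul hw).add (hw.const_mul J) |>.add (hu.mul hc4)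
  have hc2 : Tendsto c2 l _ :=
    (((hP.const_mul E).add ((hw.pow 2).const_mul G)).add ((hP.const_mul H).mul hQ)).add
      (hu.mul hc3)
  have hc1 : Tendsto c1 l _ := ((hP.const_mul C).mul hw).add (hu.mul hc2)
  -- `u⁴` times the quadratic, written in Horner form in `u`
  have horner : ∀ᶠ z in l, A * x z ^ 2 + u z * c1 z = 0 := by
    filter_upwards [h] with z hz
    unfold ternaryQuadratic at hz
    linear_combination u z ^ 4 * hz
  have hA : A = 0 := by
    simpa using eq_zero_of_eventually_add_mul_eq_zero ((hP.pow 2).const_mul A) hc1 hu horner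
  subst hA
  have hc1_zero : ∀ᶠ z in l, c1 z = 0 := by
    filter_upwards [horner, hu0] with z hz hz0
    simpa [hz0] using hz
  have hC : C = 0 := by
    simpa [hr] using eq_zero_of_eventually_add_mul_eq_zero ((hP.const_mul C).mul hw) hc2 hu hc1_zero
  subst hC
  have hc2_zero : ∀ᶠ z in l, c2 z = 0 := by
    filter_upwards [hc1_zero, hu0] with z hz hz0
    simpa [c1, hz0] using hz
  refine ⟨rfl, rfl, ?_⟩
  simpa using eq_zero_of_eventually_add_mul_eq_zero
    (((hP.const_mul E).add ((hw.pow 2).const_mul G)).add ((hP.const_mul H).mul hQ)) hc3 hu hc2_zero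

end

section

variable {𝕜 : Type*} [NontriviallyNormedField 𝕜] {A B C D E F G H J K : 𝕜}

lemma coeffs_eq_zero_of_eventually_ternaryQuadratic_eq_zero_nhdsNE {a r : 𝕜} {P Q w : 𝕜 → 𝕜}
    (hr : r ≠ 0) (hP : Tendsto (fun z ↦ (z - a) ^ 2 * P z) (𝓝[≠] a) (𝓝 1))
    (hQ : Tendsto Q (𝓝[≠] a) (𝓝 0)) (hw : Tendsto (fun z ↦ (z - a) * w z) (𝓝[≠] a) (𝓝 r))
    (h : ∀ᶠ z in 𝓝[≠] a, ternaryQuadratic A B C D E F G H J K (P z) (Q z) (w z) = 0) :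
    A = 0 ∧ C = 0 ∧ E + G * r ^ 2 = 0 := by
  refine coeffs_eq_zero_of_eventually_ternaryQuadratic_eq_zero hr ?_ ?_ hP hQ hw h
  · simpa using ((continuous_sub_right a).tendsto a).mono_left nhdsWithin_le_nhds
  · filter_upwards [self_mem_nhdsWithin] with z hz using sub_ne_zero.mpr hz

end

theorem stmt_13_general (ω : ℂ) (hω : ω.im ≠ 0) (p1 p2 : ℂ) (hp : p1 - p2 ∉ lattice ω)
    (P1 P2 : ℂ → ℂ)
    (hP1 : DifferentiableOn ℂ P1 {z : ℂ | z - p1 ∉ lattice ω})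
    (hP2 : DifferentiableOn ℂ P2 {z : ℂ | z - p2 ∉ lattice ω})
    (hP1pp : ∃ U ∈ nhds p1, ∃ g : ℂ → ℂ, DifferentiableOn ℂ g U ∧
      ∀ z ∈ U, z ≠ p1 → g z = P1 z - 1 / (z - p1)^2)
    (hP2pp : ∃ U ∈ nhds p2, ∃ g : ℂ → ℂ, DifferentiableOn ℂ g U ∧
      ∀ z ∈ U, z ≠ p2 → g z = P2 z - 1 / (z - p2)^2)
    (hP1z : P1 p2 = 0) (hP2z : P2 p1 = 0)
    (w : ℂ → ℂ)
    (hwp1 : ∃ U ∈ nhds p1, ∃ g : ℂ → ℂ, DifferentiableOn ℂ g U ∧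
      (∀ z ∈ U, z ≠ p1 → g z = (z - p1) * w z) ∧ g p1 = 1)
    (hwp2 : ∃ U ∈ nhds p2, ∃ g : ℂ → ℂ, DifferentiableOn ℂ g U ∧
      (∀ z ∈ U, z ≠ p2 → g z = (z - p2) * w z) ∧ g p2 = -1)
    (A B C D E F G H J K : ℂ)
    (heq : ∀ z ∈ latDom ω p1 p2,
      A * (P1 z)^2 + B * (P2 z)^2 + C * (P1 z) * (w z) + D * (P2 z) * (w z)
        + E * (P1 z) + F * (P2 z) + G * (w z)^2 + H * (P1 z) * (P2 z)
        + J * (w z) + K = 0) :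
    A = 0 ∧ B = 0 ∧ C = 0 ∧ D = 0 ∧ E + G = 0 ∧ F + G = 0 := by
  have hp' : p2 - p1 ∉ lattice ω := fun h ↦ hp (by simpa using neg_mem_lattice h)
  obtain ⟨hA, hC, hEG⟩ := coeffs_eq_zero_of_eventually_ternaryQuadratic_eq_zero_nhdsNE
    one_ne_zero (tendsto_sub_sq_mul_of_principalPart hP1pp)
    (hP2z ▸ tendsto_nhdsNE_of_differentiableOn hω hP2 hp) (tendsto_sub_mul_of_simplePole hwp1)
    ((eventually_mem_latDom hω p1 p2 p1).mono heq)
  obtain ⟨hB, hD, hFG⟩ := coeffs_eq_zero_of_eventually_ternaryQuadratic_eq_zero_nhdsNE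
    (neg_ne_zero.mpr one_ne_zero) (tendsto_sub_sq_mul_of_principalPart hP2pp)
    (hP1z ▸ tendsto_nhdsNE_of_differentiableOn hω hP1 hp') (tendsto_sub_mul_of_simplePole hwp2)
    ((eventually_mem_latDom hω p1 p2 p2).mono fun z hz ↦ by
      rw [← ternaryQuadratic_swap]; exact heq z hz)
  exact ⟨hA, hB, hC, hD, by simpa using hEG, by simpa using hFG⟩

/-- Let `P1, P2` be `Γ`-periodic, with `P_l` holomorphic off `p_l + Γ`, having
principal part exactly `1/(z−p_l)²` at `p_l` and vanishing at `p_{3−l}`, and let `w` be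
`Γ`-periodic holomorphic off `(p1+Γ) ∪ (p2+Γ)` with simple poles of residues `1`, `−1` at
`p1`, `p2`. If `A·P1² + B·P2² + C·P1·w + D·P2·w + E·P1 + F·P2 + G·w² + H·P1·P2 + J·w + K = 0`
on `ℂ∖((p1+Γ) ∪ (p2+Γ))`, then `A = B = 0`, `C = D = 0`, `E + G = 0` and `F + G = 0`. -/
theorem stmt_13 (ω : ℂ) (hω : ω.im ≠ 0) (p1 p2 : ℂ) (hp : p1 - p2 ∉ lattice ω)
    (P1 P2 : ℂ → ℂ)
    (hP1 : DifferentiableOn ℂ P1 {z : ℂ | z - p1 ∉ lattice ω})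
    (hP2 : DifferentiableOn ℂ P2 {z : ℂ | z - p2 ∉ lattice ω})
    (hP1per1 : ∀ z, z - p1 ∉ lattice ω → P1 (z + 1) = P1 z)
    (hP1perω : ∀ z, z - p1 ∉ lattice ω → P1 (z + ω) = P1 z)
    (hP2per1 : ∀ z, z - p2 ∉ lattice ω → P2 (z + 1) = P2 z)
    (hP2perω : ∀ z, z - p2 ∉ lattice ω → P2 (z + ω) = P2 z)
    (hP1pp : ∃ U ∈ nhds p1, ∃ g : ℂ → ℂ, DifferentiableOn ℂ g U ∧
      ∀ z ∈ U, z ≠ p1 → g z = P1 z - 1 / (z - p1)^2)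
    (hP2pp : ∃ U ∈ nhds p2, ∃ g : ℂ → ℂ, DifferentiableOn ℂ g U ∧
      ∀ z ∈ U, z ≠ p2 → g z = P2 z - 1 / (z - p2)^2)
    (hP1z : P1 p2 = 0) (hP2z : P2 p1 = 0)
    (w : ℂ → ℂ)
    (hw : DifferentiableOn ℂ w (latDom ω p1 p2))
    (hwper1 : ∀ z ∈ latDom ω p1 p2, w (z + 1) = w z)
    (hwperω : ∀ z ∈ latDom ω p1 p2, w (z + ω) = w z)
    (hwp1 : ∃ U ∈ nhds p1, ∃ g : ℂ → ℂ, DifferentiableOn ℂ g U ∧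
      (∀ z ∈ U, z ≠ p1 → g z = (z - p1) * w z) ∧ g p1 = 1)
    (hwp2 : ∃ U ∈ nhds p2, ∃ g : ℂ → ℂ, DifferentiableOn ℂ g U ∧
      (∀ z ∈ U, z ≠ p2 → g z = (z - p2) * w z) ∧ g p2 = -1)
    (A B C D E F G H J K : ℂ)
    (heq : ∀ z ∈ latDom ω p1 p2,
      A * (P1 z)^2 + B * (P2 z)^2 + C * (P1 z) * (w z) + D * (P2 z) * (w z)
        + E * (P1 z) + F * (P2 z) + G * (w z)^2 + H * (P1 z) * (P2 z)
        + J * (w z) + K = 0) :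
    A = 0 ∧ B = 0 ∧ C = 0 ∧ D = 0 ∧ E + G = 0 ∧ F + G = 0 :=
  stmt_13_general ω hω p1 p2 hp P1 P2 hP1 hP2 hP1pp hP2pp hP1z hP2z w hwp1 hwp2 A B C D E F G H J K
    heq
end

section
/- Let ρ > 0, let φ : B_ρ(0) → ℂ be holomorphic on the open ball B_ρ(0) ⊆ ℂ, and let g : B_ρ(0)∖{0} → ℝ be continuously differentiable with 2·∂_z g(z) = 1/z + φ(z) for all z ∈ B_ρ(0)∖{0}. Then there exists a holomorphic function ψ : B_ρ(0) → ℂ such that g(z) = log|z| + Re(ψ(z)) for all z ∈ B_ρ(0)∖{0}; in particular g(z) − log|z| extends to a harmonic function on B_ρ(0) and g(z) → −∞ as z → 0. -/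
open Complex Metric Set Filter Topology

/-!
A real function `g` is determined up to a constant by its differential, and a real-linear form
`L` on `ℂ` is `h ↦ Re (w * h)` with `w = L 1 - i L i`, i.e. twice the Wirtinger derivative.
So `dg_z (h) = Re ((1/z + φ z) h)`, which is also the differential of `log |z| + Re Φ(z)` for a
holomorphic primitive `Φ` of `φ` on the disc. The difference is therefore locally constant on
the punctured disc, which is connected, and the constant is absorbed into `ψ = Φ + c`.
-/

theorem isPreconnected_ball_diff_center {E : Type*} [NormedAddCommGroup E] [NormedSpace ℝ E]
    (hE : 1 < Module.rank ℝ E) (x : E) (r : ℝ) : IsPreconnected (ball x r \ {x}) := by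
  have polar : ball x r \ {x} = (fun p : ℝ × E => x + p.1 • p.2) '' (Ioo 0 r ×ˢ sphere 0 1) := by
    ext y
    simp only [Set.mem_sdiff, mem_ball, mem_singleton_iff, mem_image, mem_prod, mem_Ioo,
      mem_sphere_zero_iff_norm, Prod.exists]
    constructor
    · rintro ⟨hy, hyx⟩
      have hpos : 0 < ‖y - x‖ := norm_pos_iff.2 (sub_ne_zero.2 hyx)
      refine ⟨‖y - x‖, ‖y - x‖⁻¹ • (y - x), ⟨⟨hpos, by rwa [← dist_eq_norm]⟩, ?_⟩, ?_⟩
      · rw [norm_smul, norm_inv, norm_norm, inv_mul_cancel₀ hpos.ne']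
      · rw [smul_smul, mul_inv_cancel₀ hpos.ne', one_smul, add_sub_cancel]
    · rintro ⟨t, u, ⟨⟨ht0, htr⟩, hu⟩, rfl⟩
      refine ⟨?_, ?_⟩
      · simp [dist_eq_norm, norm_smul, hu, abs_of_pos ht0, htr]
      · simp [ht0.ne', ← norm_ne_zero_iff, hu]
  rw [polar]
  exact (isPreconnected_Ioo.prod (isPreconnected_sphere hE 0 1)).image _ (by fun_prop)

noncomputable def reMulCLM (w : ℂ) : ℂ →L[ℝ] ℝ :=
  reCLM.comp (ContinuousLinearMap.mul ℝ ℂ w)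

@[simp]
lemma reMulCLM_apply (w h : ℂ) : reMulCLM w h = (w * h).re := rfl

lemma reMulCLM_add (v w : ℂ) : reMulCLM (v + w) = reMulCLM v + reMulCLM w := by
  ext1 h
  simp [add_mul]

lemma ContinuousLinearMap.eq_reMulCLM (L : ℂ →L[ℝ] ℝ) :
    L = reMulCLM ((L 1 : ℂ) - I * (L I : ℂ)) := by
  ext1 h
  have hL : L h = h.re * L 1 + h.im * L I := by
    calc L h = L (h.re • 1 + h.im • I) := by congr 1; apply Complex.ext <;> simp
      _ = h.re * L 1 + h.im * L I := by simp only [map_add, map_smul, smul_eq_mul]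
  simp only [hL, reMulCLM_apply, mul_re, sub_re, sub_im, mul_im, ofReal_re, ofReal_im, I_re,
    I_im]
  ring

lemma hasFDerivAt_log_norm {z : ℂ} (hz : z ≠ 0) :
    HasFDerivAt (fun w : ℂ => Real.log ‖w‖) (reMulCLM z⁻¹) z := by
  have half_log_sq : (fun w : ℂ => Real.log ‖w‖) = fun w => 2⁻¹ * Real.log (‖w‖ ^ 2) := by
    ext w
    rw [Real.log_pow]
    push_cast
    ring
  rw [half_log_sq]
  refine (((hasStrictFDerivAt_norm_sq z).hasFDerivAt.log (by positivity)).const_mul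
    (2⁻¹ : ℝ)).congr_fderiv ?_
  ext1 h
  simp only [_root_.smul_apply, coe_innerSL_apply, Complex.inner, mul_re, conj_re, conj_im,
    inv_re, inv_im, ← normSq_eq_norm_sq, smul_eq_mul, nsmul_eq_mul, reMulCLM_apply]
  ring

lemma HasDerivAt.hasFDerivAt_re {Φ : ℂ → ℂ} {c z : ℂ} (hΦ : HasDerivAt Φ c z) :
    HasFDerivAt (fun w => (Φ w).re) (reMulCLM c) z :=
  (reCLM.hasFDerivAt.comp z (hΦ.hasFDerivAt.restrictScalars ℝ)).congr_fderiv <| by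
    ext1 h
    simp [mul_comm]

theorem exists_eq_log_norm_add_re {U : Set ℂ} (hU : IsOpen U) (hU' : IsPreconnected U)
    (h0 : (0 : ℂ) ∉ U) {g : ℂ → ℝ} (hg : DifferentiableOn ℝ g U) {Φ φ : ℂ → ℂ}
    (hΦ : ∀ z ∈ U, HasDerivAt Φ (φ z) z)
    (hdg : ∀ z ∈ U, fderiv ℝ g z = reMulCLM (z⁻¹ + φ z)) :
    ∃ c : ℝ, ∀ z ∈ U, g z = Real.log ‖z‖ + (Φ z + c).re := by
  have hmodel : ∀ z ∈ U, HasFDerivAt (fun w => Real.log ‖w‖ + (Φ w).re)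
      (reMulCLM (z⁻¹ + φ z)) z := fun z hz => by
    rw [reMulCLM_add]
    exact (hasFDerivAt_log_norm (ne_of_mem_of_not_mem hz h0)).add (hΦ z hz).hasFDerivAt_re
  obtain ⟨c, hc⟩ := hU.exists_eq_add_of_fderiv_eq hU' hg
    (fun z hz => (hmodel z hz).differentiableAt.differentiableWithinAt)
    (fun z hz => (hdg z hz).trans (hmodel z hz).fderiv.symm)
  refine ⟨c, fun z hz => ?_⟩
  rw [hc hz, add_re, ofReal_re, ← add_assoc]

lemma tendsto_log_norm_add_re_atBot {ψ : ℂ → ℂ} (hψ : ContinuousAt ψ 0) :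
    Tendsto (fun z => Real.log ‖z‖ + (ψ z).re) (𝓝[≠] 0) atBot :=
  (Real.tendsto_log_nhdsGT_zero.comp tendsto_norm_nhdsNE_zero).atBot_add
    ((continuous_re.continuousAt.comp hψ).tendsto.mono_left nhdsWithin_le_nhds)

/-- If `φ` is holomorphic on the ball `B_ρ(0)` and `g : B_ρ(0)∖{0} → ℝ` is `C¹`
with `2·∂_z g(z) = 1/z + φ(z)` (Wirtinger derivative), then `g(z) = log|z| + Re(ψ(z))` for
some holomorphic `ψ` on `B_ρ(0)`; in particular `g(z) → −∞` as `z → 0`. -/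
theorem stmt_17 (ρ : ℝ) (hρ : 0 < ρ) (φ : ℂ → ℂ)
    (hφ : DifferentiableOn ℂ φ (ball 0 ρ)) (g : ℂ → ℝ)
    (hg : ContDiffOn ℝ 1 g (ball 0 ρ \ {0}))
    (hdz : ∀ z ∈ ball (0:ℂ) ρ \ {0},
      2 * ((1/2 : ℂ) * (((fderiv ℝ g z 1 : ℝ) : ℂ)
        - Complex.I * ((fderiv ℝ g z Complex.I : ℝ) : ℂ))) = 1 / z + φ z) :
    ∃ ψ : ℂ → ℂ, DifferentiableOn ℂ ψ (ball 0 ρ) ∧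
      (∀ z ∈ ball (0:ℂ) ρ \ {0}, g z = Real.log ‖z‖ + (ψ z).re) ∧
      Filter.Tendsto g (nhdsWithin 0 (ball 0 ρ \ {0})) Filter.atBot := by
  obtain ⟨Φ, hΦ⟩ := hφ.isExactOn_ball
  have hdg : ∀ z ∈ ball (0 : ℂ) ρ \ {0}, fderiv ℝ g z = reMulCLM (z⁻¹ + φ z) := fun z hz => by
    rw [(fderiv ℝ g z).eq_reMulCLM, ← one_div, ← hdz z hz]
    ring_nf
  obtain ⟨c, hc⟩ := exists_eq_log_norm_add_re (isOpen_ball.sdiff isClosed_singleton)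
    (isPreconnected_ball_diff_center (by simp) 0 ρ) (fun h => h.2 rfl)
    (hg.differentiableOn one_ne_zero) (fun z hz => hΦ z hz.1) hdg
  have hψ : ∀ z ∈ ball (0 : ℂ) ρ, HasDerivAt (fun w => Φ w + c) (φ z) z :=
    fun z hz => (hΦ z hz).add_const _
  refine ⟨fun w => Φ w + c, fun z hz => (hψ z hz).differentiableAt.differentiableWithinAt,
    hc, ?_⟩
  refine ((tendsto_log_norm_add_re_atBot (hψ 0 (mem_ball_self hρ)).continuousAt).mono_left
    (nhdsWithin_mono _ fun z hz => hz.2)).congr' ?_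
  filter_upwards [self_mem_nhdsWithin] with z hz
  exact (hc z hz).symm
end
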